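/- arXiv:1606.01281 — 2 statements merged into one kernel-verified Lean document; each statement's English description precedes it below -/
import Mathlib

section
/- For integers p ≥ 3, q ≥ 3, s ≥ 0 and n = p + q + s - 1, the graph S_n^{p,q} obtained from cycles C_p and C_q sharing exactly one common vertex w, with s pendent edges attached at w, satisfies D_R(S_n^{p,q}) = (1/3)[-p^3 - q^3 + (2n+1)(p^2+q^2) + (1-9n)(p+q) + 9n^2 + 5n - 2]. -/
open Finset

/-- The effective resistance between `a` and `b` in the electrical network obtained
from `G` by replacing each edge with a unit resistor, defined via Thomson's
principle as the minimal energy of a unit flow from `a` to `b`. -/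
noncomputable def eRes {V : Type*} [Fintype V] (G : SimpleGraph V) (a b : V) : ℝ :=
  sInf { E : ℝ | ∃ f : V → V → ℝ,
    (∀ u v, f u v = - f v u) ∧
    (∀ u v, ¬ G.Adj u v → f u v = 0) ∧
    (∀ v, v ≠ a → v ≠ b → ∑ u, f v u = 0) ∧
    (∑ u, f a u = 1) ∧
    E = (1/2) * ∑ u, ∑ v, (f u v)^2 }

/-- The degree of a vertex. -/
noncomputable def vdeg {V : Type*} (G : SimpleGraph V) (v : V) : ℕ :=
  Nat.card (G.neighborSet v)

/-- `Kf_v(G)`, the sum of resistance distances from `v` to all vertices. -/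
noncomputable def KfAt {V : Type*} [Fintype V] (G : SimpleGraph V) (v : V) : ℝ :=
  ∑ u : V, eRes G u v

/-- The Kirchhoff index `Kf(G) = Σ_{{u,v}} r(u,v)`. -/
noncomputable def Kf {V : Type*} [Fintype V] (G : SimpleGraph V) : ℝ :=
  (1/2) * ∑ v : V, ∑ u : V, eRes G u v

/-- `D_v(G) = Σ_u d(u) r(u,v)`. -/
noncomputable def DAt {V : Type*} [Fintype V] (G : SimpleGraph V) (v : V) : ℝ :=
  ∑ u : V, (vdeg G u : ℝ) * eRes G u v

/-- The degree resistance distance `D_R(G) = Σ_{{u,v}} (d(u)+d(v)) r(u,v)`. -/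
noncomputable def DR {V : Type*} [Fintype V] (G : SimpleGraph V) : ℝ :=
  (1/2) * ∑ v : V, ∑ u : V, ((vdeg G u : ℝ) + (vdeg G v : ℝ)) * eRes G u v


/-- `S_n^{p,q}`: the cycles `C_p` (on vertices `0,…,p-1`) and `C_q`
(on vertices `0, p, p+1, …, p+q-2`) share exactly the vertex `0`, and the
remaining `n+1-p-q` vertices are pendent vertices attached to `0`. -/
def SGraph (p q n : ℕ) : SimpleGraph (Fin n) :=
  SimpleGraph.fromRel (fun a b =>
    (b.val = a.val + 1 ∧ b.val ≤ p - 1) ∨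
    (a.val = 0 ∧ b.val = p - 1) ∨
    (a.val = 0 ∧ b.val = p) ∨
    (p ≤ a.val ∧ b.val = a.val + 1 ∧ b.val ≤ p + q - 2) ∨
    (a.val = 0 ∧ b.val = p + q - 2) ∨
    (a.val = 0 ∧ p + q - 1 ≤ b.val))

/-!
The shared vertex `0` is a cut vertex whose blocks are the two cycles and the pendent edges.
Grounding `0`, the potential `G t` of a unit current entering at `t` lives on the block of `t`:
on `C_L` it is the Green's function `min(i, k) (L - max(i, k)) / L` of the path obtained by
cutting the cycle open at `0`, on a pendent edge it is the indicator of `t`. By Thomson's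
principle `r(u, v) = G u u + G v v - 2 G u v`, so `D_R` reduces to the block sums
`∑ i (L - i) = L (L² - 1) / 6` and `∑ i, G k i = k (L - k) / 2`.
-/

open Finset Matrix

section Antisymmetric

variable {V : Type*} [Fintype V]

lemma sum_sum_eq_zero_of_antisymm {f : V → V → ℝ} (hf : ∀ u v, f u v = -f v u) :
    ∑ u, ∑ v, f u v = 0 := by
  have h : ∑ u, ∑ v, f u v = ∑ u, ∑ v, -f u v := by
    rw [Finset.sum_comm]
    exact sum_congr rfl fun u _ => sum_congr rfl fun v _ => hf v u
  simp only [sum_neg_distrib] at h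
  linarith

lemma sum_sum_mul_sub_of_antisymm {f : V → V → ℝ} (hf : ∀ u v, f u v = -f v u) (φ : V → ℝ) :
    ∑ u, ∑ v, f u v * (φ u - φ v) = 2 * ∑ u, φ u * ∑ v, f u v := by
  have h : ∀ u v, f u v * (φ u - φ v) = f u v * φ u + f v u * φ v := fun u v => by
    rw [hf v u]; ring
  simp only [h, sum_add_distrib]
  rw [Finset.sum_comm (f := fun u v => f v u * φ v)]
  simp only [mul_sum, ← sum_add_distrib, two_mul]
  exact sum_congr rfl fun u _ => sum_congr rfl fun v _ => by ring

end Antisymmetric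

namespace SimpleGraph

variable {V : Type*} [Fintype V]

lemma vdeg_eq_degree (G : SimpleGraph V) [DecidableRel G.Adj] (v : V) : vdeg G v = G.degree v := by
  rw [vdeg, Nat.card_eq_fintype_card, card_neighborSet_eq_degree]

def IsUnitFlow (G : SimpleGraph V) (a b : V) (f : V → V → ℝ) : Prop :=
  (∀ u v, f u v = -f v u) ∧ (∀ u v, ¬ G.Adj u v → f u v = 0) ∧
    (∀ v, v ≠ a → v ≠ b → ∑ u, f v u = 0) ∧ ∑ u, f a u = 1

noncomputable def flowEnergy (f : V → V → ℝ) : ℝ := 1 / 2 * ∑ u, ∑ v, f u v ^ 2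

variable {G : SimpleGraph V} {a b : V} {f : V → V → ℝ}

lemma eRes_eq_sInf_flowEnergy (G : SimpleGraph V) (a b : V) :
    eRes G a b = sInf {E | ∃ f, G.IsUnitFlow a b f ∧ E = flowEnergy f} := by
  simp only [eRes, IsUnitFlow, flowEnergy, and_assoc]

lemma not_isUnitFlow_self (f : V → V → ℝ) : ¬ G.IsUnitFlow a a f := by
  rintro ⟨hanti, -, hcons, hsrc⟩
  have := sum_sum_eq_zero_of_antisymm hanti
  rw [sum_eq_single a fun v _ hv => hcons v hv hv, hsrc] at this
  · exact one_ne_zero this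
  · simp

lemma eRes_self (G : SimpleGraph V) (a : V) : eRes G a a = 0 := by
  rw [eRes_eq_sInf_flowEnergy]
  convert Real.sInf_empty
  exact Set.eq_empty_iff_forall_notMem.2 fun E ⟨f, hf, _⟩ => not_isUnitFlow_self f hf

lemma IsUnitFlow.sum_apply [DecidableEq V] (hf : G.IsUnitFlow a b f) (hab : a ≠ b) (u : V) :
    ∑ v, f u v = (Pi.single a 1 - Pi.single b 1 : V → ℝ) u := by
  obtain ⟨hanti, -, hcons, hsrc⟩ := hf
  have htarget : ∑ v, f b v = -1 := by
    have := sum_sum_eq_zero_of_antisymm hanti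
    rw [← add_sum_erase _ _ (mem_univ a), ← add_sum_erase _ _ (mem_erase.2 ⟨hab.symm, mem_univ b⟩),
      sum_eq_zero fun v hv => hcons v (ne_of_mem_erase (mem_of_mem_erase hv))
        (ne_of_mem_erase hv), hsrc] at this
    linarith
  by_cases hua : u = a
  · subst hua; simp [hsrc, hab]
  by_cases hub : u = b
  · subst hub; simp [htarget, hua]
  simp [hcons u hua hub, hua, hub]

lemma IsUnitFlow.sum_sum_mul_sub [DecidableEq V] (hf : G.IsUnitFlow a b f) (hab : a ≠ b)
    (φ : V → ℝ) : ∑ u, ∑ v, f u v * (φ u - φ v) = 2 * (φ a - φ b) := by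
  rw [sum_sum_mul_sub_of_antisymm hf.1]
  simp only [hf.sum_apply hab, Pi.sub_apply, Pi.single_apply, mul_sub, sum_sub_distrib,
    mul_ite, mul_one, mul_zero, sum_ite_eq', mem_univ, if_true]

lemma sum_ite_adj_sub [DecidableEq V] [DecidableRel G.Adj] (φ : V → ℝ) (u : V) :
    ∑ v, (if G.Adj u v then φ u - φ v else 0) = (G.lapMatrix ℝ *ᵥ φ) u := by
  rw [lapMatrix_mulVec_apply, ← sum_filter, ← neighborFinset_eq_filter, sum_sub_distrib,
    sum_const, card_neighborFinset_eq_degree, nsmul_eq_mul]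

/-- Thomson's principle: the current `φ u - φ v` along the edges is the unit flow of least
energy, because every other unit flow differs from it by a circulation orthogonal to it. -/
theorem eRes_eq_of_lapMatrix_mulVec [DecidableEq V] [DecidableRel G.Adj] {φ : V → ℝ}
    (hφ : G.lapMatrix ℝ *ᵥ φ = Pi.single a 1 - Pi.single b 1) : eRes G a b = φ a - φ b := by
  rcases eq_or_ne a b with rfl | hab
  · rw [eRes_self, sub_self]
  set F : V → V → ℝ := fun u v => if G.Adj u v then φ u - φ v else 0
  have hF : G.IsUnitFlow a b F := by
    refine ⟨fun u v => ?_, fun u v h => if_neg h, fun v hva hvb => ?_, ?_⟩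
    · by_cases h : G.Adj u v
      · simp [F, h, h.symm]
      · have h' : ¬ G.Adj v u := fun h' => h h'.symm
        simp [F, h, h']
    · simp [F, sum_ite_adj_sub, hφ, hva, hvb]
    · simp [F, sum_ite_adj_sub, hφ, hab]
  have hcross : ∀ f, G.IsUnitFlow a b f → ∑ u, ∑ v, f u v * F u v = 2 * (φ a - φ b) :=
    fun f hf => by
      rw [← hf.sum_sum_mul_sub hab φ]
      refine sum_congr rfl fun u _ => sum_congr rfl fun v _ => ?_
      by_cases h : G.Adj u v
      · simp [F, h]
      · simp [F, h, hf.2.1 u v h]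
  have hlower : ∀ f, G.IsUnitFlow a b f → φ a - φ b ≤ flowEnergy f := fun f hf => by
    have hsq : 0 ≤ ∑ u, ∑ v, (f u v - F u v) ^ 2 := by positivity
    have hexp : ∀ u v, (f u v - F u v) ^ 2 = f u v ^ 2 - 2 * (f u v * F u v) + F u v * F u v :=
      fun u v => by ring
    simp only [hexp, sum_add_distrib, sum_sub_distrib, ← mul_sum] at hsq
    rw [hcross f hf, hcross F hF] at hsq
    rw [flowEnergy]
    linarith
  have hF_energy : flowEnergy F = φ a - φ b := by
    rw [flowEnergy]
    simp only [sq, hcross F hF]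
    ring
  rw [eRes_eq_sInf_flowEnergy]
  exact IsLeast.csInf_eq ⟨⟨F, hF, hF_energy.symm⟩, fun E ⟨f, hf, hE⟩ => hE ▸ hlower f hf⟩

/-- `Φ t` is the potential of a unit current entering at `t` and leaving at the ground `h`. -/
def IsGreenFunction [DecidableEq V] (G : SimpleGraph V) [DecidableRel G.Adj] (h : V)
    (Φ : V → V → ℝ) : Prop :=
  ∀ t, G.lapMatrix ℝ *ᵥ Φ t = Pi.single t 1 - Pi.single h 1

theorem IsGreenFunction.eRes_eq [DecidableEq V] [DecidableRel G.Adj] {h : V} {Φ : V → V → ℝ}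
    (hΦ : G.IsGreenFunction h Φ) (hsymm : ∀ u v, Φ u v = Φ v u) (u v : V) :
    eRes G u v = Φ u u + Φ v v - 2 * Φ u v := by
  rw [eRes_eq_of_lapMatrix_mulVec (φ := Φ u - Φ v) (by rw [mulVec_sub, hΦ, hΦ]; abel),
    Pi.sub_apply, Pi.sub_apply, hsymm v u]
  ring

theorem DR_eq_of_eRes_eq {Φ : V → V → ℝ} (hsymm : ∀ u v, Φ u v = Φ v u)
    (hR : ∀ u v, eRes G u v = Φ u u + Φ v v - 2 * Φ u v) :
    DR G = Fintype.card V * ∑ u, (vdeg G u : ℝ) * Φ u u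
      + (∑ u, (vdeg G u : ℝ)) * ∑ u, Φ u u - 2 * ∑ u, (vdeg G u : ℝ) * ∑ v, Φ u v := by
  set d : V → ℝ := fun u => vdeg G u
  set X : V → V → ℝ := fun u v => Φ u u + Φ v v - 2 * Φ u v
  have hX : ∀ u v, X u v = X v u := fun u v => by simp only [X, hsymm u v]; ring
  have hsplit : ∑ v, ∑ u, (d u + d v) * X u v = 2 * ∑ u, d u * ∑ v, X u v := by
    simp only [add_mul, sum_add_distrib, mul_sum, two_mul]
    rw [Finset.sum_comm]
    exact congrArg _ (sum_congr rfl fun v _ => sum_congr rfl fun u _ => by rw [hX])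
  have hrow : ∀ u, ∑ v, X u v = Fintype.card V * Φ u u + ∑ v, Φ v v - 2 * ∑ v, Φ u v :=
    fun u => by simp only [X, sum_sub_distrib, sum_add_distrib, sum_const, ← mul_sum,
      card_univ, nsmul_eq_mul]
  simp only [DR, hR]
  change 1 / 2 * ∑ v, ∑ u, (d u + d v) * X u v = _
  have hterm : ∀ u, d u * ∑ v, X u v
      = Fintype.card V * (d u * Φ u u) + d u * ∑ v, Φ v v - 2 * (d u * ∑ v, Φ u v) :=
    fun u => by rw [hrow]; ring
  rw [hsplit, sum_congr rfl fun u _ => hterm u]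
  simp only [sum_add_distrib, sum_sub_distrib, ← mul_sum, ← sum_mul]
  ring

end SimpleGraph

/-- Green's function of the path `0, 1, …, L` grounded at both ends, i.e. the
potential at `i` of a unit current entering at `k` and leaving at `0` and `L`. -/
noncomputable def pathGreen (L k i : ℕ) : ℝ := (min k i : ℕ) * ((L : ℝ) - (max k i : ℕ)) / L

section PathGreen

variable {L k i : ℕ}

lemma pathGreen_comm (L k i : ℕ) : pathGreen L k i = pathGreen L i k := by
  rw [pathGreen, pathGreen, min_comm, max_comm]

lemma pathGreen_of_le (h : i ≤ k) : pathGreen L k i = i * ((L : ℝ) - k) / L := by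
  rw [pathGreen, min_eq_right h, max_eq_left h]

lemma pathGreen_of_ge (h : k ≤ i) : pathGreen L k i = k * ((L : ℝ) - i) / L := by
  rw [pathGreen, min_eq_left h, max_eq_right h]

@[simp] lemma pathGreen_zero_right (L k : ℕ) : pathGreen L k 0 = 0 := by
  simp [pathGreen_of_le (Nat.zero_le k)]

@[simp] lemma pathGreen_zero_left (L i : ℕ) : pathGreen L 0 i = 0 := by
  rw [pathGreen_comm, pathGreen_zero_right]

lemma pathGreen_length (hk : k ≤ L) : pathGreen L k L = 0 := by
  simp [pathGreen_of_ge hk]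

lemma pathGreen_self (L i : ℕ) : pathGreen L i i = i * ((L : ℝ) - i) / L :=
  pathGreen_of_le le_rfl

lemma pathGreen_laplacian (hi : 1 ≤ i) (hiL : i < L) :
    (pathGreen L k i - pathGreen L k (i - 1)) + (pathGreen L k i - pathGreen L k (i + 1))
      = if i = k then 1 else 0 := by
  have hL : (L : ℝ) ≠ 0 := Nat.cast_ne_zero.2 (by omega)
  have hpred : ((i - 1 : ℕ) : ℝ) = i - 1 := by rw [Nat.cast_sub hi, Nat.cast_one]
  rcases lt_trichotomy i k with h | rfl | h
  · rw [pathGreen_of_le h.le, pathGreen_of_le (by omega), pathGreen_of_le h, if_neg h.ne, hpred]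
    push_cast; ring
  · rw [pathGreen_of_le le_rfl, pathGreen_of_le (by omega), pathGreen_of_ge (by omega), if_pos rfl,
      hpred]
    field_simp; push_cast; ring
  · rw [pathGreen_of_ge h.le, pathGreen_of_ge (by omega), pathGreen_of_ge (by omega),
      if_neg h.ne', hpred]
    push_cast; ring

/-- The current leaving through the two grounded ends. -/
lemma pathGreen_one_add_pathGreen_pred (hk : 1 ≤ k) (hkL : k < L) :
    pathGreen L k 1 + pathGreen L k (L - 1) = 1 := by
  have hL : (L : ℝ) ≠ 0 := Nat.cast_ne_zero.2 (by omega)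
  rw [pathGreen_of_le hk, pathGreen_of_ge (by omega), Nat.cast_sub (by omega)]
  field_simp; push_cast; ring

lemma sum_range_natCast (m : ℕ) : ∑ i ∈ range m, (i : ℝ) = m * (m - 1) / 2 := by
  induction m with
  | zero => simp
  | succ m ih => rw [sum_range_succ, ih]; push_cast; ring

lemma sum_range_mul_sub (L : ℕ) : ∑ i ∈ range L, (i : ℝ) * (L - i) = L * (L ^ 2 - 1) / 6 := by
  induction L with
  | zero => simp
  | succ L ih =>
    have hshift : ∀ i ∈ range L, (i : ℝ) * ((L + 1 : ℕ) - i) = i * (L - i) + i := fun i _ => by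
      push_cast; ring
    rw [sum_range_succ, sum_congr rfl hshift, sum_add_distrib, ih, sum_range_natCast]
    push_cast; ring

lemma sum_pathGreen_self (hL : L ≠ 0) :
    ∑ i ∈ range L, pathGreen L i i = ((L : ℝ) ^ 2 - 1) / 6 := by
  have hL' : (L : ℝ) ≠ 0 := Nat.cast_ne_zero.2 hL
  simp only [pathGreen_self, ← sum_div, sum_range_mul_sub]
  field_simp

lemma sum_pathGreen (hk : k ≤ L) : ∑ i ∈ range L, pathGreen L k i = k * ((L : ℝ) - k) / 2 := by
  rcases Nat.eq_zero_or_pos L with rfl | hL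
  · simp [Nat.le_zero.1 hk]
  have hL' : (L : ℝ) ≠ 0 := by positivity
  rw [← sum_range_add_sum_Ico _ hk, sum_Ico_eq_sum_range]
  have hleft : ∀ i ∈ range k, pathGreen L k i = ((L : ℝ) - k) / L * i := fun i hi => by
    rw [pathGreen_of_le (mem_range.1 hi).le]; ring
  have hright : ∀ j ∈ range (L - k), pathGreen L k (k + j) = k / L * (((L - k : ℕ) : ℝ) - j) :=
    fun j _ => by rw [pathGreen_of_ge (by omega), Nat.cast_sub hk]; push_cast; ring
  rw [sum_congr rfl hleft, sum_congr rfl hright, ← mul_sum, ← mul_sum, sum_sub_distrib,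
    sum_const, card_range, nsmul_eq_mul, sum_range_natCast, sum_range_natCast, Nat.cast_sub hk]
  field_simp
  ring

lemma sum_Ico_one_eq_sum_range {f : ℕ → ℝ} (h : f 0 = 0) (m : ℕ) :
    ∑ j ∈ Ico 1 m, f j = ∑ j ∈ range m, f j := by
  rcases Nat.eq_zero_or_pos m with rfl | hm
  · simp
  · rw [range_eq_Ico, sum_eq_sum_Ico_succ_bot hm, h, zero_add]

end PathGreen

namespace SGraph

def rel (p q x y : ℕ) : Prop :=
  (y = x + 1 ∧ y ≤ p - 1) ∨ (x = 0 ∧ y = p - 1) ∨ (x = 0 ∧ y = p) ∨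
    (p ≤ x ∧ y = x + 1 ∧ y ≤ p + q - 2) ∨ (x = 0 ∧ y = p + q - 2) ∨ (x = 0 ∧ p + q - 1 ≤ y)

def AdjLabel (p q x y : ℕ) : Prop := x ≠ y ∧ (rel p q x y ∨ rel p q y x)

instance (p q : ℕ) : DecidableRel (AdjLabel p q) := fun x y => by
  unfold AdjLabel rel; infer_instance

variable {p q n : ℕ}

lemma adj_iff {u v : Fin n} : (SGraph p q n).Adj u v ↔ AdjLabel p q u v := by
  simp only [SGraph, SimpleGraph.fromRel_adj, AdjLabel, rel, ne_eq, Fin.ext_iff]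

def neighborLabels (p q n x : ℕ) : Finset ℕ := (range n).filter (AdjLabel p q x)

lemma map_neighborFinset [DecidableRel (SGraph p q n).Adj] (x : Fin n) :
    ((SGraph p q n).neighborFinset x).map Fin.valEmbedding = neighborLabels p q n x := by
  ext y
  simp only [mem_map, SimpleGraph.mem_neighborFinset, adj_iff, Fin.valEmbedding_apply,
    neighborLabels, mem_filter, mem_range]
  constructor
  · rintro ⟨v, hv, rfl⟩
    exact ⟨v.2, hv⟩
  · rintro ⟨hy, hxy⟩
    exact ⟨⟨y, hy⟩, hxy, rfl⟩

lemma degree_eq_card_neighborLabels [DecidableRel (SGraph p q n).Adj] (x : Fin n) :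
    (SGraph p q n).degree x = (neighborLabels p q n x).card := by
  rw [← SimpleGraph.card_neighborFinset_eq_degree, ← card_map Fin.valEmbedding,
    map_neighborFinset]

lemma lapMatrix_mulVec_apply [DecidableRel (SGraph p q n).Adj] (f : ℕ → ℝ) (x : Fin n) :
    ((SGraph p q n).lapMatrix ℝ *ᵥ fun y => f y) x = ∑ y ∈ neighborLabels p q n x, (f x - f y) := by
  rw [SimpleGraph.lapMatrix_mulVec_apply, degree_eq_card_neighborLabels, sum_sub_distrib, sum_const,
    nsmul_eq_mul, ← map_neighborFinset, sum_map]
  rfl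

/-- The vertex at position `i` of `C_p`; positions `0` and `p` are the shared vertex `0`. -/
def cycA (p i : ℕ) : ℕ := if i = p then 0 else i

/-- The vertex at position `j` of `C_q`; positions `0` and `q` are the shared vertex `0`. -/
def cycB (p q j : ℕ) : ℕ := if j = 0 ∨ j = q then 0 else p + j - 1

lemma cycA_of_lt {i : ℕ} (hi : i < p) : cycA p i = i := if_neg hi.ne

lemma cycB_of_lt {j : ℕ} (hj : 1 ≤ j) (hjq : j < q) : cycB p q j = p + j - 1 :=
  if_neg (by omega)

variable (hp : 3 ≤ p) (hq : 3 ≤ q)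
include hp hq

lemma neighborLabels_zero (hn : p + q - 1 ≤ n) :
    neighborLabels p q n 0 = {1, p - 1, p, p + q - 2} ∪ Ico (p + q - 1) n := by
  ext y
  rw [neighborLabels, mem_filter, mem_range]
  simp only [AdjLabel, rel, true_and, mem_insert, mem_singleton, mem_union, mem_Ico]
  omega

lemma neighborLabels_of_pos (hn : p + q - 1 ≤ n) {x : ℕ} (hx : 1 ≤ x) (hxq : x ≤ p + q - 2) :
    neighborLabels p q n x =
      {if x = p then 0 else x - 1, if x = p - 1 ∨ x = p + q - 2 then 0 else x + 1} := by
  -- removing the truncated subtractions keeps `omega` fast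
  obtain ⟨P, rfl⟩ : ∃ P, p = P + 3 := ⟨p - 3, by omega⟩
  obtain ⟨Q, rfl⟩ : ∃ Q, q = Q + 3 := ⟨q - 3, by omega⟩
  obtain ⟨X, rfl⟩ : ∃ X, x = X + 1 := ⟨x - 1, by omega⟩
  have e1 : P + 3 - 1 = P + 2 := rfl
  have e2 : P + 3 + (Q + 3) - 2 = P + Q + 4 := by omega
  have e3 : P + 3 + (Q + 3) - 1 = P + Q + 5 := by omega
  rw [e2, e3] at *
  ext y
  rw [neighborLabels, mem_filter, mem_range]
  simp only [AdjLabel, rel, mem_insert, mem_singleton, e1, Nat.add_sub_cancel,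
    Nat.add_eq_zero_iff, one_ne_zero, and_false, false_and, false_or, or_false]
  split_ifs <;> omega

lemma neighborLabels_of_pendant {x : ℕ} (hx : p + q - 1 ≤ x) (hxn : x < n) :
    neighborLabels p q n x = {0} := by
  ext y
  rw [neighborLabels, mem_filter, mem_range]
  simp only [AdjLabel, rel, mem_singleton]
  omega

lemma neighborLabels_cycA (hn : p + q - 1 ≤ n) {i : ℕ} (hi : 1 ≤ i)
    (hip : i < p) : neighborLabels p q n (cycA p i) = {cycA p (i - 1), cycA p (i + 1)} := by
  have hnext : (if i = p - 1 ∨ i = p + q - 2 then 0 else i + 1) = cycA p (i + 1) := by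
    by_cases h : i + 1 = p
    · rw [if_pos (Or.inl (by omega)), cycA, if_pos h]
    · rw [if_neg (by omega), cycA_of_lt (by omega)]
  rw [cycA_of_lt hip, neighborLabels_of_pos hp hq hn hi (by omega), if_neg hip.ne, hnext,
    cycA_of_lt (i := i - 1) (by omega)]

lemma neighborLabels_cycB (hn : p + q - 1 ≤ n) {j : ℕ} (hj : 1 ≤ j)
    (hjq : j < q) : neighborLabels p q n (cycB p q j) = {cycB p q (j - 1), cycB p q (j + 1)} := by
  have hprev : (if p + j - 1 = p then 0 else p + j - 1 - 1) = cycB p q (j - 1) := by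
    by_cases h : j = 1
    · rw [if_pos (by omega), cycB, if_pos (Or.inl (by omega))]
    · rw [if_neg (by omega), cycB_of_lt (by omega) (by omega)]
      omega
  have hnext : (if p + j - 1 = p - 1 ∨ p + j - 1 = p + q - 2 then 0 else p + j - 1 + 1)
      = cycB p q (j + 1) := by
    by_cases h : j + 1 = q
    · rw [if_pos (Or.inr (by omega)), cycB, if_pos (Or.inr h)]
    · rw [if_neg (by omega), cycB_of_lt (by omega) (by omega)]
      omega
  rw [cycB_of_lt hj hjq, neighborLabels_of_pos hp hq hn (by omega) (by omega), hprev, hnext]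

omit hq in
lemma cycA_pred_ne_succ (i : ℕ) : cycA p (i - 1) ≠ cycA p (i + 1) := by
  unfold cycA; split_ifs <;> omega

lemma cycB_pred_ne_succ {j : ℕ} (hj : 1 ≤ j) : cycB p q (j - 1) ≠ cycB p q (j + 1) := by
  by_cases h : j + 1 = q
  · rw [cycB, cycB, if_pos (Or.inr h), if_neg (show ¬(j - 1 = 0 ∨ j - 1 = q) by omega)]
    omega
  · rw [cycB, cycB, if_neg (by omega : ¬(j + 1 = 0 ∨ j + 1 = q))]
    split_ifs <;> omega

lemma sum_neighborLabels_zero (hn : p + q - 1 ≤ n) (f : ℕ → ℝ) :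
    ∑ y ∈ neighborLabels p q n 0, f y = f (cycA p 1) + f (cycA p (p - 1)) + f (cycB p q 1)
      + f (cycB p q (q - 1)) + ∑ y ∈ Ico (p + q - 1) n, f y := by
  have hB1 : cycB p q 1 = p := by rw [cycB_of_lt le_rfl (by omega)]; omega
  have hB2 : cycB p q (q - 1) = p + q - 2 := by rw [cycB_of_lt (by omega) (by omega)]; omega
  rw [cycA_of_lt (show 1 < p by omega), cycA_of_lt (show p - 1 < p by omega), hB1, hB2,
    neighborLabels_zero hp hq hn, sum_union, sum_insert, sum_insert, sum_insert, sum_singleton]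
  · ring
  all_goals simp only [mem_insert, mem_singleton, disjoint_left, mem_Ico]
  all_goals omega

/-- The Green's function of `SGraph p q n` grounded at `0`, on vertex labels: it vanishes
unless both vertices lie on the same cycle, where it is `pathGreen` in the cycle positions,
or are the same pendent vertex. -/
noncomputable def green (p q t x : ℕ) : ℝ :=
  if t < p ∧ x < p then pathGreen p t x
  else if p ≤ t ∧ t < p + q - 1 ∧ p ≤ x ∧ x < p + q - 1 then pathGreen q (t + 1 - p) (x + 1 - p)
  else if x = t then 1 else 0

omit hp hq in
lemma green_comm (t x : ℕ) : green p q t x = green p q x t := by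
  unfold green
  split_ifs <;> first | rfl | exact pathGreen_comm _ _ _ | omega

lemma green_zero_right (t : ℕ) : green p q t 0 = 0 := by
  unfold green
  split_ifs <;> first | exact pathGreen_zero_right _ _ | omega | rfl

lemma green_cycA {t i : ℕ} (ht : t < p) (hi : i ≤ p) :
    green p q t (cycA p i) = pathGreen p t i := by
  rcases hi.lt_or_eq with hi | rfl
  · rw [cycA_of_lt hi, green, if_pos ⟨ht, hi⟩]
  · rw [cycA, if_pos rfl, green_zero_right hp hq, pathGreen_length ht.le]

omit hq in
lemma green_cycA_of_le {t i : ℕ} (ht : p ≤ t) (hi : i ≤ p) : green p q t (cycA p i) = 0 := by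
  have hx : cycA p i < p := by unfold cycA; split_ifs <;> omega
  rw [green, if_neg (by omega), if_neg (by omega), if_neg (by omega)]

lemma green_cycB {k j : ℕ} (hk : 1 ≤ k) (hkq : k < q) (hj : j ≤ q) :
    green p q (cycB p q k) (cycB p q j) = pathGreen q k j := by
  rw [cycB_of_lt hk hkq]
  by_cases hj0 : j = 0 ∨ j = q
  · rw [cycB, if_pos hj0, green_zero_right hp hq]
    rcases hj0 with rfl | rfl
    · exact (pathGreen_zero_right _ _).symm
    · exact (pathGreen_length hkq.le).symm
  · rw [cycB, if_neg hj0, green, if_neg (by omega), if_pos (by omega)]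
    congr 1 <;> omega

lemma green_cycB_of_not {t j : ℕ} (ht : t < p ∨ p + q - 1 ≤ t) (hj : j ≤ q) :
    green p q t (cycB p q j) = 0 := by
  by_cases hj0 : j = 0 ∨ j = q
  · rw [cycB, if_pos hj0, green_zero_right hp hq]
  · rw [cycB, if_neg hj0, green, if_neg (by omega), if_neg (by omega), if_neg (by omega)]

omit hp in
lemma green_of_pendant {t : ℕ} (ht : p + q - 1 ≤ t) (x : ℕ) :
    green p q t x = if x = t then 1 else 0 := by
  unfold green
  rw [if_neg (by omega), if_neg (by omega)]

lemma laplacian_green_cycA {i : ℕ} (hi : 1 ≤ i) (hip : i < p) (t : ℕ) :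
    (green p q t (cycA p i) - green p q t (cycA p (i - 1)))
      + (green p q t (cycA p i) - green p q t (cycA p (i + 1)))
      = if cycA p i = t then 1 else 0 := by
  by_cases ht : t < p
  · rw [green_cycA hp hq ht hip.le, green_cycA hp hq ht (by omega : i - 1 ≤ p),
      green_cycA hp hq ht (by omega : i + 1 ≤ p), pathGreen_laplacian hi hip, cycA_of_lt hip]
  · rw [green_cycA_of_le hp (by omega) hip.le,
      green_cycA_of_le hp (by omega) (by omega : i - 1 ≤ p),
      green_cycA_of_le hp (by omega) (by omega : i + 1 ≤ p), cycA_of_lt hip, if_neg (by omega)]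
    ring

lemma laplacian_green_cycB {j : ℕ} (hj : 1 ≤ j) (hjq : j < q) (t : ℕ) :
    (green p q t (cycB p q j) - green p q t (cycB p q (j - 1)))
      + (green p q t (cycB p q j) - green p q t (cycB p q (j + 1)))
      = if cycB p q j = t then 1 else 0 := by
  by_cases ht : p ≤ t ∧ t < p + q - 1
  · obtain ⟨k, hk, hkq, rfl⟩ : ∃ k, 1 ≤ k ∧ k < q ∧ cycB p q k = t :=
      ⟨t + 1 - p, by omega, by omega, by rw [cycB_of_lt (by omega) (by omega)]; omega⟩
    rw [green_cycB hp hq hk hkq hjq.le, green_cycB hp hq hk hkq (by omega : j - 1 ≤ q),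
      green_cycB hp hq hk hkq (by omega : j + 1 ≤ q), pathGreen_laplacian hj hjq,
      cycB_of_lt hj hjq, cycB_of_lt hk hkq]
    congr 1
    exact propext ⟨fun h => by omega, fun h => by omega⟩
  · rw [green_cycB_of_not hp hq (by omega) hjq.le,
      green_cycB_of_not hp hq (by omega) (by omega : j - 1 ≤ q),
      green_cycB_of_not hp hq (by omega) (by omega : j + 1 ≤ q), cycB_of_lt hj hjq,
      if_neg (by omega)]
    ring

omit hp in
lemma sum_Ico_green (t : ℕ) :
    ∑ y ∈ Ico (p + q - 1) n, green p q t y = if p + q - 1 ≤ t ∧ t < n then 1 else 0 := by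
  rw [sum_congr rfl fun y hy => by rw [green_comm, green_of_pendant hq (mem_Ico.1 hy).1],
    sum_ite_eq]
  simp only [mem_Ico]

lemma sum_green_neighborLabels_zero (hn : p + q - 1 ≤ n) {t : ℕ} (htn : t < n) :
    ∑ y ∈ neighborLabels p q n 0, green p q t y = if t = 0 then 0 else 1 := by
  rw [sum_neighborLabels_zero hp hq hn, sum_Ico_green hq]
  rcases lt_or_ge t p with ht | ht
  · rw [green_cycA hp hq ht (by omega : 1 ≤ p), green_cycA hp hq ht (by omega : p - 1 ≤ p),
      green_cycB_of_not hp hq (Or.inl ht) (by omega : 1 ≤ q),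
      green_cycB_of_not hp hq (Or.inl ht) (by omega : q - 1 ≤ q), if_neg (by omega)]
    rcases Nat.eq_zero_or_pos t with rfl | ht0
    · simp
    · rw [if_neg ht0.ne', ← pathGreen_one_add_pathGreen_pred ht0 ht]
      ring
  rw [green_cycA_of_le hp ht (by omega : 1 ≤ p), green_cycA_of_le hp ht (by omega : p - 1 ≤ p),
    if_neg (show t ≠ 0 by omega)]
  rcases lt_or_ge t (p + q - 1) with htB | htP
  · obtain ⟨k, hk, hkq, rfl⟩ : ∃ k, 1 ≤ k ∧ k < q ∧ cycB p q k = t :=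
      ⟨t + 1 - p, by omega, by omega, by rw [cycB_of_lt (by omega) (by omega)]; omega⟩
    rw [green_cycB hp hq hk hkq (by omega : 1 ≤ q), green_cycB hp hq hk hkq (by omega : q - 1 ≤ q),
      if_neg (by omega)]
    linarith [pathGreen_one_add_pathGreen_pred hk hkq]
  · rw [green_cycB_of_not hp hq (Or.inr htP) (by omega : 1 ≤ q),
      green_cycB_of_not hp hq (Or.inr htP) (by omega : q - 1 ≤ q), if_pos ⟨htP, htn⟩]
    ring

lemma laplacian_green (hn : p + q - 1 ≤ n) {t x : ℕ} (ht : t < n) (hx : x < n) :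
    ∑ y ∈ neighborLabels p q n x, (green p q t x - green p q t y)
      = (if x = t then 1 else 0) - (if x = 0 then 1 else 0) := by
  rcases Nat.eq_zero_or_pos x with rfl | hx0
  · simp only [green_zero_right hp hq, zero_sub, sum_neg_distrib,
      sum_green_neighborLabels_zero hp hq hn ht]
    by_cases h : t = 0
    · simp [h]
    · simp [h, Ne.symm h]
  rw [if_neg hx0.ne']
  rcases lt_or_ge x p with hxA | hxA
  · rw [← cycA_of_lt hxA, neighborLabels_cycA hp hq hn hx0 hxA, sum_pair (cycA_pred_ne_succ hp x),
      laplacian_green_cycA hp hq hx0 hxA, sub_zero]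
  rcases lt_or_ge x (p + q - 1) with hxB | hxP
  · obtain ⟨j, hj, hjq, rfl⟩ : ∃ j, 1 ≤ j ∧ j < q ∧ cycB p q j = x :=
      ⟨x + 1 - p, by omega, by omega, by rw [cycB_of_lt (by omega) (by omega)]; omega⟩
    rw [neighborLabels_cycB hp hq hn hj hjq, sum_pair (cycB_pred_ne_succ hp hq hj),
      laplacian_green_cycB hp hq hj hjq, sub_zero]
  · rw [neighborLabels_of_pendant hp hq hxP hx, sum_singleton, green_zero_right hp hq, sub_zero,
      sub_zero, green_comm, green_of_pendant hq hxP]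
    exact if_congr eq_comm rfl rfl

theorem isGreenFunction_green [DecidableRel (SGraph p q n).Adj] (hn : p + q - 1 ≤ n) :
    (SGraph p q n).IsGreenFunction ⟨0, by omega⟩ fun t x => green p q t x := by
  intro t
  ext x
  rw [lapMatrix_mulVec_apply (green p q t), laplacian_green hp hq hn t.2 x.2]
  simp only [Pi.sub_apply, Pi.single_apply, Fin.ext_iff]

/-- `0` is adjacent to four cycle vertices and to the `n + 1 - p - q` pendent vertices. -/
noncomputable def deg (p q n x : ℕ) : ℝ :=
  if x = 0 then n + 5 - p - q else if x < p + q - 1 then 2 else 1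

lemma card_neighborLabels (hn : p + q - 1 ≤ n) {x : ℕ} (hx : x < n) :
    ((neighborLabels p q n x).card : ℝ) = deg p q n x := by
  rcases Nat.eq_zero_or_pos x with rfl | hx0
  · rw [card_eq_sum_ones, Nat.cast_sum, sum_neighborLabels_zero hp hq hn, sum_const,
      Nat.card_Ico, nsmul_eq_mul, Nat.cast_sub hn, Nat.cast_sub (show 1 ≤ p + q by omega), deg,
      if_pos rfl]
    push_cast
    ring
  rw [deg, if_neg hx0.ne']
  rcases lt_or_ge x (p + q - 1) with hxC | hxP
  · rw [neighborLabels_of_pos hp hq hn hx0 (by omega), card_pair, if_pos hxC]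
    · norm_num
    · split_ifs <;> omega
  · rw [neighborLabels_of_pendant hp hq hxP hx, card_singleton, if_neg (by omega), Nat.cast_one]

lemma vdeg_eq_deg (hn : p + q - 1 ≤ n) (x : Fin n) :
    (vdeg (SGraph p q n) x : ℝ) = deg p q n x := by
  classical
  rw [SimpleGraph.vdeg_eq_degree, degree_eq_card_neighborLabels, card_neighborLabels hp hq hn x.2]

lemma sum_range_of_blocks (hn : p + q - 1 ≤ n) {f a b : ℕ → ℝ} {c : ℝ}
    (ha : ∀ i < p, f (cycA p i) = a i) (hb : ∀ j, 1 ≤ j → j < q → f (cycB p q j) = b j)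
    (hc : ∀ x, p + q - 1 ≤ x → x < n → f x = c) :
    ∑ x ∈ range n, f x = ∑ i ∈ range p, a i + ∑ j ∈ Ico 1 q, b j + ((n : ℝ) + 1 - p - q) * c := by
  have hA : ∑ x ∈ range p, f x = ∑ i ∈ range p, a i :=
    sum_congr rfl fun i hi => by rw [← ha i (mem_range.1 hi), cycA_of_lt (mem_range.1 hi)]
  have hB : ∑ x ∈ Ico p (p + q - 1), f x = ∑ j ∈ Ico 1 q, b j := by
    rw [sum_Ico_eq_sum_range, sum_Ico_eq_sum_range, show p + q - 1 - p = q - 1 by omega]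
    refine sum_congr rfl fun k hk => ?_
    have hkq := mem_range.1 hk
    rw [← hb (1 + k) (by omega) (by omega), cycB_of_lt (by omega) (by omega)]
    congr 1
    omega
  have hP : ∑ x ∈ Ico (p + q - 1) n, f x = ((n : ℝ) + 1 - p - q) * c := by
    rw [sum_congr rfl fun x hx => hc x (mem_Ico.1 hx).1 (mem_Ico.1 hx).2, sum_const, Nat.card_Ico,
      nsmul_eq_mul, Nat.cast_sub hn, Nat.cast_sub (show 1 ≤ p + q by omega)]
    push_cast
    ring
  rw [← sum_range_add_sum_Ico _ hn, ← sum_range_add_sum_Ico _ (show p ≤ p + q - 1 by omega), hA,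
    hB, hP]

omit hp hq in
lemma deg_of_pos_of_lt {x : ℕ} (hx0 : x ≠ 0) (hx : x < p + q - 1) : deg p q n x = 2 := by
  rw [deg, if_neg hx0, if_pos hx]

omit hp hq in
lemma deg_of_pendant {x : ℕ} (hx : p + q - 1 ≤ x) (hx0 : x ≠ 0) : deg p q n x = 1 := by
  rw [deg, if_neg hx0, if_neg (by omega)]

omit hq in
lemma deg_cycB {j : ℕ} (hj : 1 ≤ j) (hjq : j < q) : deg p q n (cycB p q j) = 2 := by
  rw [cycB_of_lt hj hjq]
  exact deg_of_pos_of_lt (by omega) (by omega)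

lemma sum_green_cycA (hn : p + q - 1 ≤ n) {k : ℕ} (hk : k < p) :
    ∑ y ∈ range n, green p q k y = k * ((p : ℝ) - k) / 2 := by
  rw [sum_range_of_blocks hp hq hn (a := pathGreen p k) (b := fun _ => 0) (c := 0)
      (fun i hi => green_cycA hp hq hk hi.le)
      (fun j _ hjq => green_cycB_of_not hp hq (Or.inl hk) hjq.le)
      (fun x hx _ => by rw [green_comm, green_of_pendant hq hx, if_neg (by omega)]),
    sum_pathGreen hk.le]
  simp

lemma sum_green_cycB (hn : p + q - 1 ≤ n) {k : ℕ} (hk : 1 ≤ k) (hkq : k < q) :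
    ∑ y ∈ range n, green p q (cycB p q k) y = k * ((q : ℝ) - k) / 2 := by
  have hkB := cycB_of_lt (p := p) hk hkq
  rw [sum_range_of_blocks hp hq hn (a := fun _ => 0) (b := pathGreen q k) (c := 0)
      (fun i hi => green_cycA_of_le hp (by omega) hi.le)
      (fun j _ hjq => green_cycB hp hq hk hkq hjq.le)
      (fun x hx _ => by rw [green_comm, green_of_pendant hq hx, if_neg (by omega)]),
    sum_Ico_one_eq_sum_range (pathGreen_zero_right q k), sum_pathGreen hkq.le]
  simp

omit hp in
lemma sum_green_of_pendant {t : ℕ} (ht : p + q - 1 ≤ t) (htn : t < n) :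
    ∑ y ∈ range n, green p q t y = 1 := by
  rw [sum_congr rfl fun y _ => green_of_pendant hq ht y, sum_ite_eq', if_pos (mem_range.2 htn)]

lemma sum_deg (hn : p + q - 1 ≤ n) : ∑ x ∈ range n, deg p q n x = 2 * ((n : ℝ) + 1) := by
  rw [sum_range_of_blocks hp hq hn (a := fun i => 2 + if i = 0 then (n : ℝ) + 3 - p - q else 0)
      (b := fun _ => 2) (c := 1)
      (fun i hi => by
        rcases Nat.eq_zero_or_pos i with rfl | hi0
        · rw [cycA_of_lt hi, deg, if_pos rfl, if_pos rfl]
          ring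
        · rw [cycA_of_lt hi, deg_of_pos_of_lt hi0.ne' (by omega), if_neg hi0.ne', add_zero])
      (fun j hj hjq => deg_cycB hp hj hjq)
      (fun x hx _ => deg_of_pendant hx (by omega)),
    sum_add_distrib, sum_ite_eq', if_pos (mem_range.2 (by omega))]
  simp only [sum_const, card_range, Nat.card_Ico, nsmul_eq_mul]
  push_cast [Nat.cast_sub (show 1 ≤ q by omega)]
  ring

lemma sum_green_self (hn : p + q - 1 ≤ n) :
    ∑ x ∈ range n, green p q x x
      = ((p : ℝ) ^ 2 - 1) / 6 + ((q : ℝ) ^ 2 - 1) / 6 + ((n : ℝ) + 1 - p - q) := by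
  rw [sum_range_of_blocks hp hq hn (a := fun i => pathGreen p i i) (b := fun j => pathGreen q j j)
      (c := 1)
      (fun i hi => by rw [cycA_of_lt hi, green, if_pos ⟨hi, hi⟩])
      (fun j hj hjq => green_cycB hp hq hj hjq hjq.le)
      (fun x hx _ => by rw [green_of_pendant hq hx, if_pos rfl]),
    sum_Ico_one_eq_sum_range (f := fun j => pathGreen q j j) (pathGreen_zero_left q 0),
    sum_pathGreen_self (by omega), sum_pathGreen_self (by omega)]
  ring

lemma sum_deg_mul_green_self (hn : p + q - 1 ≤ n) :
    ∑ x ∈ range n, deg p q n x * green p q x x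
      = ((p : ℝ) ^ 2 - 1) / 3 + ((q : ℝ) ^ 2 - 1) / 3 + ((n : ℝ) + 1 - p - q) := by
  rw [sum_range_of_blocks hp hq hn (a := fun i => 2 * pathGreen p i i)
      (b := fun j => 2 * pathGreen q j j) (c := 1)
      (fun i hi => by
        rw [cycA_of_lt hi, green, if_pos ⟨hi, hi⟩]
        rcases Nat.eq_zero_or_pos i with rfl | hi0
        · simp
        · rw [deg_of_pos_of_lt hi0.ne' (by omega)])
      (fun j hj hjq => by
        rw [green_cycB hp hq hj hjq hjq.le, deg_cycB hp hj hjq])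
      (fun x hx _ => by rw [green_of_pendant hq hx, if_pos rfl, deg_of_pendant hx (by omega),
        mul_one]),
    ← mul_sum, ← mul_sum,
    sum_Ico_one_eq_sum_range (f := fun j => pathGreen q j j) (pathGreen_zero_left q 0),
    sum_pathGreen_self (by omega), sum_pathGreen_self (by omega)]
  ring

lemma sum_deg_mul_sum_green (hn : p + q - 1 ≤ n) :
    ∑ x ∈ range n, deg p q n x * ∑ y ∈ range n, green p q x y
      = (p : ℝ) * (p ^ 2 - 1) / 6 + (q : ℝ) * (q ^ 2 - 1) / 6 + ((n : ℝ) + 1 - p - q) := by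
  rw [sum_range_of_blocks hp hq hn (a := fun i => (i : ℝ) * (p - i))
      (b := fun j => (j : ℝ) * (q - j)) (c := 1)
      (fun i hi => by
        rw [cycA_of_lt hi, sum_green_cycA hp hq hn hi]
        rcases Nat.eq_zero_or_pos i with rfl | hi0
        · simp
        · rw [deg_of_pos_of_lt hi0.ne' (by omega)]
          ring)
      (fun j hj hjq => by
        rw [sum_green_cycB hp hq hn hj hjq, deg_cycB hp hj hjq]
        ring)
      (fun x hx hxn => by
        rw [sum_green_of_pendant hq hx hxn, deg_of_pendant hx (by omega), one_mul]),
    sum_Ico_one_eq_sum_range (by simp), sum_range_mul_sub, sum_range_mul_sub]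
  ring

theorem DR_eq_sum_range [DecidableRel (SGraph p q n).Adj] (hn : p + q - 1 ≤ n) :
    DR (SGraph p q n) = n * ∑ x ∈ range n, deg p q n x * green p q x x
      + (∑ x ∈ range n, deg p q n x) * ∑ x ∈ range n, green p q x x
      - 2 * ∑ x ∈ range n, deg p q n x * ∑ y ∈ range n, green p q x y := by
  have hsymm : ∀ u v : Fin n, green p q u v = green p q v u := fun u v => green_comm u v
  have hrow : ∀ x : Fin n, ∑ y : Fin n, green p q x y = ∑ y ∈ range n, green p q x y :=
    fun x => Fin.sum_univ_eq_sum_range (green p q x) n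
  rw [SimpleGraph.DR_eq_of_eRes_eq hsymm ((isGreenFunction_green hp hq hn).eRes_eq hsymm)]
  simp only [vdeg_eq_deg hp hq hn, Fintype.card_fin, hrow,
    Fin.sum_univ_eq_sum_range (fun x => deg p q n x),
    Fin.sum_univ_eq_sum_range (fun x => green p q x x),
    Fin.sum_univ_eq_sum_range (fun x => deg p q n x * green p q x x),
    Fin.sum_univ_eq_sum_range (fun x => deg p q n x * ∑ y ∈ range n, green p q x y)]

end SGraph

open SGraph in
/-- Closed formula for the degree resistance distance of `S_n^{p,q}`. -/
theorem DR_SGraph (p q s n : ℕ) (hp : 3 ≤ p) (hq : 3 ≤ q) (hn : n = p + q + s - 1) :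
    DR (SGraph p q n) =
      (1/3) * (-(p : ℝ)^3 - (q : ℝ)^3 + (2*(n : ℝ) + 1) * ((p : ℝ)^2 + (q : ℝ)^2)
        + (1 - 9*(n : ℝ)) * ((p : ℝ) + (q : ℝ)) + 9*(n : ℝ)^2 + 5*(n : ℝ) - 2) := by
  classical
  have hn' : p + q - 1 ≤ n := by omega
  rw [DR_eq_sum_range hp hq hn', sum_deg hp hq hn', sum_green_self hp hq hn',
    sum_deg_mul_green_self hp hq hn', sum_deg_mul_sum_green hp hq hn']
  ring
end

section
/- For integers p ≥ 3, q ≥ 3, m ≥ 0 and n = p + q + m - 1, the graph P_n^{p,q} consisting of disjoint cycles C_p and C_q joined by a path of length m satisfies D_R(P_n^{p,q}) = (1/3)[p^3 + q^3 + (2q+2m-1)p^2 + (2p+2m-1)q^2 + (6m^2-3m-3)(p+q) + 12mpq + 2m^3 - 3m^2 - 3m + 2]. -/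
set_option maxHeartbeats 1600000


open Finset

/-- `P_n^{p,q}`: the cycle `C_p` on vertices `0,…,p-1`, a path
`p-1, p, …, p+m-1` of length `m`, and the cycle `C_q` on vertices
`p+m-1, …, n-1`, where `n = p + q + m - 1`. -/
def PGraph (p m n : ℕ) : SimpleGraph (Fin n) :=
  SimpleGraph.fromRel (fun a b =>
    (b.val = a.val + 1) ∨
    (a.val = 0 ∧ b.val = p - 1) ∨
    (a.val = p + m - 1 ∧ b.val = n - 1))


-- ===== auxiliary development =====

section Network
variable {V : Type*} [Fintype V] [DecidableEq V]

lemma sum_sum_antisymm (g : V → V → ℝ) (hg : ∀ u v, g u v = - g v u) :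
    ∑ v, ∑ u, g v u = 0 := by
  have h : ∑ v, ∑ u, g v u = - ∑ v, ∑ u, g v u := by
    conv_lhs => rw [Finset.sum_comm]
    rw [← Finset.sum_neg_distrib]
    refine Finset.sum_congr rfl fun u _ => ?_
    rw [← Finset.sum_neg_distrib]
    exact Finset.sum_congr rfl fun v _ => hg v u
  linarith

/-- total divergence zero ⇒ divergence at sink is -1 -/
lemma div_sink (g : V → V → ℝ) (hg : ∀ u v, g u v = - g v u) (a b : V) (hab : a ≠ b)
    (hcons : ∀ v, v ≠ a → v ≠ b → ∑ u, g v u = 0) (ha : ∑ u, g a u = 1) :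
    ∑ u, g b u = -1 := by
  have h0 := sum_sum_antisymm g hg
  have hsplit : ∑ v : V, ∑ u, g v u = ∑ v ∈ ({a, b} : Finset V), ∑ u, g v u := by
    refine (Finset.sum_subset (Finset.subset_univ _) ?_).symm
    intro v _ hv
    simp only [Finset.mem_insert, Finset.mem_singleton, not_or] at hv
    exact hcons v hv.1 hv.2
  rw [hsplit, Finset.sum_pair hab, ha] at h0
  linarith

lemma pairing (g : V → V → ℝ) (hg : ∀ u v, g u v = - g v u) (φ : V → ℝ) :
    ∑ u, ∑ v, g u v * (φ u - φ v) = 2 * ∑ v, φ v * ∑ u, g v u := by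
  have h1 : ∑ u, ∑ v, g u v * φ u = ∑ v, φ v * ∑ u, g v u := by
    refine Finset.sum_congr rfl fun u _ => ?_
    rw [Finset.mul_sum]
    exact Finset.sum_congr rfl fun v _ => by ring
  have h2 : ∑ u, ∑ v, g u v * φ v = - ∑ v, φ v * ∑ u, g v u := by
    rw [Finset.sum_comm, ← Finset.sum_neg_distrib]
    refine Finset.sum_congr rfl fun v _ => ?_
    rw [Finset.mul_sum, ← Finset.sum_neg_distrib]
    refine Finset.sum_congr rfl fun u _ => ?_
    rw [hg u v]; ring
  calc ∑ u, ∑ v, g u v * (φ u - φ v)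
      = ∑ u, ∑ v, (g u v * φ u - g u v * φ v) := by
        refine Finset.sum_congr rfl fun u _ => Finset.sum_congr rfl fun v _ => by ring
    _ = ∑ u, ∑ v, g u v * φ u - ∑ u, ∑ v, g u v * φ v := by
        rw [← Finset.sum_sub_distrib]
        exact Finset.sum_congr rfl fun u _ => by rw [Finset.sum_sub_distrib]
    _ = 2 * ∑ v, φ v * ∑ u, g v u := by rw [h1, h2]; ring

theorem eRes_eq_of_flow (G : SimpleGraph V) (a b : V) (φ : V → ℝ) (f : V → V → ℝ)
    (hanti : ∀ u v, f u v = - f v u)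
    (hsupp : ∀ u v, ¬ G.Adj u v → f u v = 0)
    (hgrad : ∀ u v, G.Adj u v → f u v = φ u - φ v)
    (hcons : ∀ v, v ≠ a → v ≠ b → ∑ u, f v u = 0)
    (ha : ∑ u, f a u = 1) :
    eRes G a b = φ a - φ b := by
  have hab : a ≠ b := by
    rintro rfl
    have h0 := sum_sum_antisymm f hanti
    have : ∑ v : V, ∑ u, f v u = ∑ v ∈ ({a} : Finset V), ∑ u, f v u := by
      refine (Finset.sum_subset (Finset.subset_univ _) ?_).symm
      intro v _ hv
      simp only [Finset.mem_singleton] at hv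
      exact hcons v hv hv
    rw [this, Finset.sum_singleton, ha] at h0
    norm_num at h0
  have hb : ∑ u, f b u = -1 := div_sink f hanti a b hab hcons ha
  have hsq : ∀ u v, (f u v)^2 = f u v * (φ u - φ v) := by
    intro u v
    by_cases h : G.Adj u v
    · rw [hgrad u v h]; ring
    · rw [hsupp u v h]; ring
  have henergy : (1/2 : ℝ) * ∑ u, ∑ v, (f u v)^2 = φ a - φ b := by
    have h1 : ∑ u, ∑ v, (f u v)^2 = ∑ u, ∑ v, f u v * (φ u - φ v) := by
      exact Finset.sum_congr rfl fun u _ => Finset.sum_congr rfl fun v _ => hsq u v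
    rw [h1, pairing f hanti φ]
    have hdiv : ∑ v, φ v * ∑ u, f v u = ∑ v ∈ ({a, b} : Finset V), φ v * ∑ u, f v u := by
      refine (Finset.sum_subset (Finset.subset_univ _) ?_).symm
      intro v _ hv
      simp only [Finset.mem_insert, Finset.mem_singleton, not_or] at hv
      rw [hcons v hv.1 hv.2, mul_zero]
    rw [hdiv, Finset.sum_pair hab, ha, hb]
    ring
  have hmem : (φ a - φ b) ∈ { E : ℝ | ∃ f : V → V → ℝ,
      (∀ u v, f u v = - f v u) ∧
      (∀ u v, ¬ G.Adj u v → f u v = 0) ∧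
      (∀ v, v ≠ a → v ≠ b → ∑ u, f v u = 0) ∧
      (∑ u, f a u = 1) ∧
      E = (1/2) * ∑ u, ∑ v, (f u v)^2 } := ⟨f, hanti, hsupp, hcons, ha, henergy.symm⟩
  have hlb : ∀ E ∈ { E : ℝ | ∃ f : V → V → ℝ,
      (∀ u v, f u v = - f v u) ∧
      (∀ u v, ¬ G.Adj u v → f u v = 0) ∧
      (∀ v, v ≠ a → v ≠ b → ∑ u, f v u = 0) ∧
      (∑ u, f a u = 1) ∧
      E = (1/2) * ∑ u, ∑ v, (f u v)^2 }, φ a - φ b ≤ E := by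
    rintro E ⟨g, hganti, hgsupp, hgcons, hga, rfl⟩
    have hcanti : ∀ u v, (g u v - f u v) = - (g v u - f v u) := fun u v => by
      rw [hganti u v, hanti u v]; ring
    have hgb : ∑ u, g b u = -1 := div_sink g hganti a b hab hgcons hga
    have hcdiv : ∀ v, ∑ u, (g v u - f v u) = 0 := by
      intro v
      rw [Finset.sum_sub_distrib]
      by_cases hva : v = a
      · subst hva; rw [hga, ha]; ring
      by_cases hvb : v = b
      · subst hvb; rw [hgb, hb]; ring
      · rw [hgcons v hva hvb, hcons v hva hvb]; ring
    have hcross : ∑ u, ∑ v, f u v * (g u v - f u v) = 0 := by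
      have heq : ∀ u v, f u v * (g u v - f u v) = (g u v - f u v) * (φ u - φ v) := by
        intro u v
        by_cases h : G.Adj u v
        · rw [hgrad u v h]; ring
        · rw [hsupp u v h, hgsupp u v h]; ring
      calc ∑ u, ∑ v, f u v * (g u v - f u v)
          = ∑ u, ∑ v, (g u v - f u v) * (φ u - φ v) :=
            Finset.sum_congr rfl fun u _ => Finset.sum_congr rfl fun v _ => heq u v
        _ = 2 * ∑ v, φ v * ∑ u, (g v u - f v u) := pairing _ hcanti φ
        _ = 0 := by
            rw [Finset.sum_congr rfl fun v (_ : v ∈ Finset.univ) => by rw [hcdiv v, mul_zero]]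
            simp
    have hexpand : ∑ u, ∑ v, (g u v)^2
        = ∑ u, ∑ v, (f u v)^2 + 2 * ∑ u, ∑ v, f u v * (g u v - f u v)
          + ∑ u, ∑ v, (g u v - f u v)^2 := by
      have h2 : ∀ u v, (g u v)^2 = (f u v)^2 + 2 * (f u v * (g u v - f u v)) + (g u v - f u v)^2 := by
        intro u v; ring
      calc ∑ u, ∑ v, (g u v)^2
          = ∑ u, ∑ v, ((f u v)^2 + 2 * (f u v * (g u v - f u v)) + (g u v - f u v)^2) :=
            Finset.sum_congr rfl fun u _ => Finset.sum_congr rfl fun v _ => h2 u v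
        _ = _ := by
            simp only [Finset.sum_add_distrib, Finset.mul_sum]
    have hpos : (0:ℝ) ≤ ∑ u, ∑ v, (g u v - f u v)^2 :=
      Finset.sum_nonneg fun u _ => Finset.sum_nonneg fun v _ => sq_nonneg _
    rw [← henergy]
    rw [hexpand, hcross]
    linarith
  exact le_antisymm (csInf_le ⟨φ a - φ b, fun E hE => hlb E hE⟩ hmem)
    (le_csInf ⟨_, hmem⟩ hlb)

theorem eRes_self (G : SimpleGraph V) (a : V) : eRes G a a = 0 := by
  unfold eRes
  convert Real.sInf_empty using 2
  rw [Set.eq_empty_iff_forall_notMem]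
  rintro E ⟨f, hanti, _, hcons, ha, _⟩
  have h0 := sum_sum_antisymm f hanti
  have : ∑ v : V, ∑ u, f v u = ∑ v ∈ ({a} : Finset V), ∑ u, f v u := by
    refine (Finset.sum_subset (Finset.subset_univ _) ?_).symm
    intro v _ hv
    simp only [Finset.mem_singleton] at hv
    exact hcons v hv hv
  rw [this, Finset.sum_singleton, ha] at h0
  norm_num at h0

theorem eRes_comm (G : SimpleGraph V) (a b : V) : eRes G a b = eRes G b a := by
  by_cases hab : a = b
  · subst hab; rfl
  unfold eRes
  congr 1
  ext E
  simp only [Set.mem_setOf_eq]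
  constructor
  all_goals {
    rintro ⟨f, hanti, hsupp, hcons, ha, hE⟩
    refine ⟨fun u v => - f u v, ?_, ?_, ?_, ?_, ?_⟩
    · intro u v; dsimp only; rw [hanti u v]
    · intro u v h; dsimp only; rw [hsupp u v h, neg_zero]
    · intro v hv1 hv2; dsimp only; rw [Finset.sum_neg_distrib, hcons v hv2 hv1, neg_zero]
    · dsimp only
      rw [Finset.sum_neg_distrib]
      rw [div_sink f hanti _ _ (by intro h; first | exact hab h | exact hab h.symm) hcons ha]
      norm_num
    · rw [hE]
      dsimp only
      congr 1
      exact Finset.sum_congr rfl fun u _ => Finset.sum_congr rfl fun v _ => by ring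
  }

end Network

namespace DRAux

/-- potential on a cycle of length `L` with terminals `a ≤ b`. -/
noncomputable def cyc (L a b x : ℕ) : ℝ :=
  if x ≤ a then (((b:ℝ)-a)/L) * ((L:ℝ) - b + x)
  else if x ≤ b then (((L:ℝ)-((b:ℝ)-a))/L) * ((b:ℝ) - x)
  else (((b:ℝ)-a)/L) * ((x:ℝ) - b)

lemma cyc_step (L a b t : ℕ) (hL : (L:ℝ) ≠ 0) (hab : a ≤ b) :
    cyc L a b t - cyc L a b (t+1)
      = if a ≤ t ∧ t < b then ((L:ℝ) - ((b:ℝ)-a))/L else -(((b:ℝ)-a)/L) := by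
  unfold cyc
  split_ifs <;> try omega
  all_goals (
    try (have h : t = a := (by omega); subst h)
    try (have h : t = b := (by omega); subst h)
    try (have h : b = a := (by omega); subst h)
    try push_cast
    try field_simp
    try ring)

lemma cyc_chord (L a b s : ℕ) (hL : (L:ℝ) ≠ 0) (hL3 : 3 ≤ L)
    (h1 : s ≤ a) (h2 : a ≤ b) (h3 : b ≤ s + (L-1)) :
    cyc L a b s - cyc L a b (s + (L-1)) = ((b:ℝ)-a)/L := by
  have hc : ((s + (L-1) : ℕ) : ℝ) = (s:ℝ) + (L:ℝ) - 1 := by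
    push_cast [Nat.cast_sub (by omega : 1 ≤ L)]; ring
  unfold cyc
  split_ifs <;> try omega
  all_goals (
    try (have h : a = b := (by omega); subst h)
    try (have h : b = s + (L-1) := (by omega); subst h)
    rw [hc] <;> try rw [hc]
    try push_cast
    try field_simp
    try ring)

lemma cyc_at_left (L a b : ℕ) (hab : a ≤ b) :
    cyc L a b a = (((b:ℝ)-a)/L) * ((L:ℝ) - ((b:ℝ)-a)) := by
  unfold cyc
  rw [if_pos le_rfl]
  ring

lemma cyc_at_right (L a b : ℕ) (hab : a ≤ b) : cyc L a b b = 0 := by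
  unfold cyc
  by_cases h : b ≤ a
  · have : a = b := by omega
    subst this
    rw [if_pos le_rfl]
    simp
  · rw [if_neg (by omega), if_pos le_rfl]
    simp

/-- the six-term divergence expression for a flow on `PGraph` induced by potential `F`. -/
noncomputable def DivE (p m n : ℕ) (F : ℕ → ℝ) (w : ℕ) : ℝ :=
  (if w + 1 < n then F w - F (w+1) else 0)
  + (if w = 0 then F 0 - F (p-1) else 0)
  + (if w = p+m-1 then F (p+m-1) - F (n-1) else 0)
  - (if 1 ≤ w then F (w-1) - F w else 0)
  - (if w = p-1 then F 0 - F (p-1) else 0)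
  - (if w = n-1 then F (p+m-1) - F (n-1) else 0)

lemma DivE_add (p m n : ℕ) (F G : ℕ → ℝ) (w : ℕ) :
    DivE p m n (fun x => F x + G x) w = DivE p m n F w + DivE p m n G w := by
  unfold DivE
  split_ifs <;> ring

/-- the explicit unit flow on `PGraph p m n` induced by a potential `F` on vertex labels. -/
noncomputable def eflow (p m n : ℕ) (F : ℕ → ℝ) (u v : Fin n) : ℝ :=
  ((if v.val = u.val + 1 then F u.val - F (u.val+1) else 0)
   + (if u.val = 0 ∧ v.val = p - 1 then F 0 - F (p-1) else 0)
   + (if u.val = p + m - 1 ∧ v.val = n - 1 then F (p+m-1) - F (n-1) else 0))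
  - ((if u.val = v.val + 1 then F v.val - F (v.val+1) else 0)
   + (if v.val = 0 ∧ u.val = p - 1 then F 0 - F (p-1) else 0)
   + (if v.val = p + m - 1 ∧ u.val = n - 1 then F (p+m-1) - F (n-1) else 0))

lemma eflow_anti (p m n : ℕ) (F : ℕ → ℝ) (u v : Fin n) :
    eflow p m n F u v = - eflow p m n F v u := by
  unfold eflow; ring

lemma PGraph_adj (p m n : ℕ) (u v : Fin n) :
    (PGraph p m n).Adj u v ↔ u.val ≠ v.val ∧
      (v.val = u.val + 1 ∨ u.val = v.val + 1 ∨ (u.val = 0 ∧ v.val = p-1)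
       ∨ (v.val = 0 ∧ u.val = p-1) ∨ (u.val = p+m-1 ∧ v.val = n-1)
       ∨ (v.val = p+m-1 ∧ u.val = n-1)) := by
  rw [PGraph, SimpleGraph.fromRel_adj]
  rw [ne_eq, Fin.ext_iff]
  tauto

section withHyp
variable (p q m n : ℕ) (hp : 3 ≤ p) (hq : 3 ≤ q) (hn : n = p + q + m - 1)
include hp hq hn

lemma eflow_supp (F : ℕ → ℝ) (u v : Fin n) (h : ¬ (PGraph p m n).Adj u v) :
    eflow p m n F u v = 0 := by
  rw [PGraph_adj] at h
  by_cases huv : u.val = v.val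
  · unfold eflow
    rw [if_neg (by omega), if_neg (by omega), if_neg (by omega),
        if_neg (by omega), if_neg (by omega), if_neg (by omega)]
    ring
  · push_neg at h
    have h6 := h huv
    unfold eflow
    rw [if_neg (by tauto), if_neg (by tauto), if_neg (by tauto),
        if_neg (by tauto), if_neg (by tauto), if_neg (by tauto)]
    ring

lemma eflow_grad (F : ℕ → ℝ) (u v : Fin n) (h : (PGraph p m n).Adj u v) :
    eflow p m n F u v = F u.val - F v.val := by
  rw [PGraph_adj] at h
  have hv := v.isLt
  have hu := u.isLt
  obtain ⟨hne, h1 | h1 | h1 | h1 | h1 | h1⟩ := h <;> unfold eflow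
  · rw [if_pos h1, if_neg (by omega), if_neg (by omega), if_neg (by omega),
        if_neg (by omega), if_neg (by omega), h1]
    ring
  · rw [if_neg (by omega), if_neg (by omega), if_neg (by omega), if_pos h1,
        if_neg (by omega), if_neg (by omega), h1]
    ring
  · rw [if_neg (by omega), if_pos h1, if_neg (by omega), if_neg (by omega),
        if_neg (by omega), if_neg (by omega), h1.1, h1.2]
    ring
  · rw [if_neg (by omega), if_neg (by omega), if_neg (by omega), if_neg (by omega),
        if_pos h1, if_neg (by omega), h1.1, h1.2]
    ring
  · rw [if_neg (by omega), if_neg (by omega), if_pos h1, if_neg (by omega),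
        if_neg (by omega), if_neg (by omega), h1.1, h1.2]
    ring
  · rw [if_neg (by omega), if_neg (by omega), if_neg (by omega), if_neg (by omega),
        if_neg (by omega), if_pos h1, h1.1, h1.2]
    ring

end withHyp

lemma sum_ite_eq_val {n : ℕ} (w : ℕ) (hw : w < n) (g : ℕ → ℝ) (c : Fin n → Prop)
    [DecidablePred c] (hc : ∀ u : Fin n, c u ↔ u.val = w) :
    (∑ u : Fin n, if c u then g u.val else 0) = g w := by
  rw [Finset.sum_eq_single ⟨w, hw⟩]
  · rw [if_pos ((hc _).mpr rfl)]
  · intro u _ hu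
    rw [if_neg]
    intro hcu
    exact hu (Fin.ext ((hc u).mp hcu))
  · intro h
    exact absurd (Finset.mem_univ _) h

lemma sum_ite_false' {n : ℕ} (g : Fin n → ℝ) (c : Fin n → Prop)
    [DecidablePred c] (hc : ∀ u, ¬ c u) :
    (∑ u : Fin n, if c u then g u else 0) = 0 := by
  rw [Finset.sum_eq_zero]
  intro u _
  rw [if_neg (hc u)]

section withHyp2
variable (p q m n : ℕ) (hp : 3 ≤ p) (hq : 3 ≤ q) (hn : n = p + q + m - 1)
include hp hq hn

lemma sum_eflow (F : ℕ → ℝ) (v : Fin n) :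
    ∑ u, eflow p m n F v u = DivE p m n F v.val := by
  have hv := v.isLt
  have hn5 : 5 ≤ n := by omega
  unfold eflow
  rw [Finset.sum_sub_distrib, Finset.sum_add_distrib, Finset.sum_add_distrib,
      Finset.sum_add_distrib, Finset.sum_add_distrib]
  have A1 : (∑ u : Fin n, if u.val = v.val + 1 then F v.val - F (v.val+1) else 0)
      = if v.val + 1 < n then F v.val - F (v.val + 1) else 0 := by
    by_cases h : v.val + 1 < n
    · rw [if_pos h, sum_ite_eq_val (v.val+1) h (fun _ => F v.val - F (v.val+1)) _ (fun u => Iff.rfl)]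
    · rw [if_neg h, sum_ite_false']
      intro u; have := u.isLt; omega
  have A2 : (∑ u : Fin n, if v.val = 0 ∧ u.val = p - 1 then F 0 - F (p-1) else 0)
      = if v.val = 0 then F 0 - F (p-1) else 0 := by
    by_cases h : v.val = 0
    · rw [if_pos h, sum_ite_eq_val (p-1) (by omega) (fun _ => F 0 - F (p-1)) _
        (fun u => by simp [h])]
    · rw [if_neg h, sum_ite_false']
      intro u; tauto
  have A3 : (∑ u : Fin n, if v.val = p+m-1 ∧ u.val = n - 1 then F (p+m-1) - F (n-1) else 0)
      = if v.val = p+m-1 then F (p+m-1) - F (n-1) else 0 := by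
    by_cases h : v.val = p+m-1
    · rw [if_pos h, sum_ite_eq_val (n-1) (by omega) (fun _ => F (p+m-1) - F (n-1)) _
        (fun u => by simp [h])]
    · rw [if_neg h, sum_ite_false']
      intro u; tauto
  have B1 : (∑ u : Fin n, if v.val = u.val + 1 then F u.val - F (u.val+1) else 0)
      = if 1 ≤ v.val then F (v.val-1) - F v.val else 0 := by
    by_cases h : 1 ≤ v.val
    · rw [if_pos h, sum_ite_eq_val (v.val-1) (by omega) (fun x => F x - F (x+1)) _
        (fun u => by omega)]
      congr 2
      omega
    · rw [if_neg h, sum_ite_false']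
      intro u; omega
  have B2 : (∑ u : Fin n, if u.val = 0 ∧ v.val = p - 1 then F 0 - F (p-1) else 0)
      = if v.val = p-1 then F 0 - F (p-1) else 0 := by
    by_cases h : v.val = p-1
    · rw [if_pos h, sum_ite_eq_val 0 (by omega) (fun _ => F 0 - F (p-1)) _
        (fun u => by simp [h])]
    · rw [if_neg h, sum_ite_false']
      intro u; tauto
  have B3 : (∑ u : Fin n, if u.val = p+m-1 ∧ v.val = n - 1 then F (p+m-1) - F (n-1) else 0)
      = if v.val = n-1 then F (p+m-1) - F (n-1) else 0 := by
    by_cases h : v.val = n-1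
    · rw [if_pos h, sum_ite_eq_val (p+m-1) (by omega) (fun _ => F (p+m-1) - F (n-1)) _
        (fun u => by simp [h])]
    · rw [if_neg h, sum_ite_false']
      intro u; tauto
  rw [A1, A2, A3, B1, B2, B3]
  unfold DivE
  ring

end withHyp2
end DRAux

namespace DRAux

section D1
variable (p q m n : ℕ) (hp : 3 ≤ p) (hq : 3 ≤ q) (hn : n = p + q + m - 1)
include hp hq hn

lemma divG1 (a1 b1 w : ℕ) (h1 : a1 ≤ b1) (h2 : b1 ≤ p-1) (hw : w < n) :
    DivE p m n (fun x => cyc p a1 b1 (min x (p-1))) w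
      = (if w = a1 then (1:ℝ) else 0) - (if w = b1 then 1 else 0) := by
  have hp0 : (p:ℝ) ≠ 0 := Nat.cast_ne_zero.mpr (by omega)
  have hstep : ∀ t, t + 1 ≤ p-1 →
      cyc p a1 b1 (min t (p-1)) - cyc p a1 b1 (min (t+1) (p-1))
        = if a1 ≤ t ∧ t < b1 then ((p:ℝ) - ((b1:ℝ)-(a1:ℝ)))/p else -((((b1:ℝ)-(a1:ℝ)))/p) := by
    intro t ht
    rw [show min t (p-1) = t from by omega, show min (t+1) (p-1) = t+1 from by omega]
    exact cyc_step p a1 b1 t hp0 h1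
  have hchord : cyc p a1 b1 (min 0 (p-1)) - cyc p a1 b1 (min (p-1) (p-1))
      = ((b1:ℝ)-(a1:ℝ))/p := by
    have h := cyc_chord p a1 b1 0 hp0 hp (by omega) h1 (by omega)
    rw [show (0 + (p-1) : ℕ) = p-1 from by omega] at h
    rw [show min 0 (p-1) = 0 from by omega, show min (p-1) (p-1) = p-1 from by omega]
    exact h
  have hconst : ∀ x y : ℕ, p-1 ≤ x → p-1 ≤ y →
      cyc p a1 b1 (min x (p-1)) - cyc p a1 b1 (min y (p-1)) = 0 := by
    intro x y hx hy
    rw [show min x (p-1) = p-1 from by omega, show min y (p-1) = p-1 from by omega, sub_self]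
  simp only [DivE]
  by_cases hw0 : w = 0
  · subst hw0
    rw [if_pos (show (0:ℕ)+1 < n by omega), if_pos rfl, if_neg (show ¬(0 = p+m-1) by omega),
        if_neg (show ¬(1 ≤ 0) by omega), if_neg (show ¬(0 = p-1) by omega),
        if_neg (show ¬(0 = n-1) by omega)]
    rw [hstep 0 (by omega), hchord]
    split_ifs <;> first | omega | (field_simp; try ring)
  by_cases hwn : w = n-1
  · subst hwn
    rw [if_neg (show ¬(n-1+1 < n) by omega), if_neg (show ¬(n-1 = 0) by omega),
        if_neg (show ¬(n-1 = p+m-1) by omega), if_pos (show 1 ≤ n-1 by omega),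
        if_neg (show ¬(n-1 = p-1) by omega), if_pos rfl]
    rw [hconst (n-1-1) (n-1) (by omega) (by omega), hconst (p+m-1) (n-1) (by omega) (by omega)]
    rw [if_neg (show ¬(n-1 = a1) by omega), if_neg (show ¬(n-1 = b1) by omega)]
    norm_num
  by_cases hwP : w = p-1
  · subst hwP
    rw [if_pos (show (p-1:ℕ)+1 < n by omega), if_neg (show ¬(p-1 = 0) by omega),
        if_pos (show 1 ≤ p-1 by omega), if_pos rfl, if_neg (show ¬(p-1 = n-1) by omega)]
    rw [hconst (p-1) (p-1+1) (by omega) (by omega), hconst (p+m-1) (n-1) (by omega) (by omega),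
        hchord]
    have hs := hstep (p-1-1) (by omega)
    rw [show (p-1-1)+1 = p-1 from by omega] at hs
    rw [hs]
    simp only [ite_self]
    split_ifs <;> first | omega | (field_simp; try ring)
  by_cases hwlt : w < p-1
  · -- 1 ≤ w < p-1
    rw [if_pos (show w+1 < n by omega), if_neg hw0, if_neg (show ¬(w = p+m-1) by omega),
        if_pos (show 1 ≤ w by omega), if_neg hwP, if_neg hwn]
    have hs := hstep (w-1) (by omega)
    rw [show (w-1)+1 = w from by omega] at hs
    rw [hstep w (by omega), hs]
    split_ifs <;> first | omega | (field_simp; try ring)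
  · -- p-1 < w < n-1
    rw [if_pos (show w+1 < n by omega), if_neg hw0, if_pos (show 1 ≤ w by omega),
        if_neg hwP, if_neg hwn]
    rw [hconst w (w+1) (by omega) (by omega), hconst (w-1) w (by omega) (by omega),
        hconst (p+m-1) (n-1) (by omega) (by omega)]
    simp only [ite_self]
    rw [if_neg (show ¬(w = a1) by omega), if_neg (show ¬(w = b1) by omega)]
    norm_num

end D1

section D23
variable (p q m n : ℕ) (hp : 3 ≤ p) (hq : 3 ≤ q) (hn : n = p + q + m - 1)
include hp hq hn

lemma divG2 (ca cb w : ℕ) (h0 : p-1 ≤ ca) (h1 : ca ≤ cb) (h2 : cb ≤ p+m-1) (hw : w < n) :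
    DivE p m n (fun x => ((cb:ℕ):ℝ) - ((min cb (max ca x) : ℕ):ℝ)) w
      = (if w = ca then (1:ℝ) else 0) - (if w = cb then 1 else 0) := by
  have hstep : ∀ t : ℕ,
      (((cb:ℕ):ℝ) - ((min cb (max ca t) : ℕ):ℝ)) - (((cb:ℕ):ℝ) - ((min cb (max ca (t+1)) : ℕ):ℝ))
        = if ca ≤ t ∧ t < cb then (1:ℝ) else 0 := by
    intro t
    by_cases hc : ca ≤ t ∧ t < cb
    · rw [if_pos hc, show min cb (max ca (t+1)) = min cb (max ca t) + 1 from by omega]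
      push_cast; ring
    · rw [if_neg hc, show min cb (max ca (t+1)) = min cb (max ca t) from by omega]
      ring
  have hchord1 : (((cb:ℕ):ℝ) - ((min cb (max ca 0) : ℕ):ℝ))
      - (((cb:ℕ):ℝ) - ((min cb (max ca (p-1)) : ℕ):ℝ)) = 0 := by
    rw [show min cb (max ca (p-1)) = min cb (max ca 0) from by omega]; ring
  have hchord2 : (((cb:ℕ):ℝ) - ((min cb (max ca (p+m-1)) : ℕ):ℝ))
      - (((cb:ℕ):ℝ) - ((min cb (max ca (n-1)) : ℕ):ℝ)) = 0 := by
    rw [show min cb (max ca (n-1)) = min cb (max ca (p+m-1)) from by omega]; ring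
  simp only [DivE]
  by_cases hw0 : w = 0
  · subst hw0
    rw [if_pos (show (0:ℕ)+1 < n by omega), if_pos rfl, if_neg (show ¬(0 = p+m-1) by omega),
        if_neg (show ¬(1 ≤ 0) by omega), if_neg (show ¬(0 = p-1) by omega),
        if_neg (show ¬(0 = n-1) by omega)]
    rw [hstep 0, hchord1]
    rw [if_neg (show ¬(ca ≤ 0 ∧ 0 < cb) by omega), if_neg (show ¬(0 = ca) by omega),
        if_neg (show ¬(0 = cb) by omega)]
    norm_num
  by_cases hwn : w = n-1
  · subst hwn
    rw [if_neg (show ¬(n-1+1 < n) by omega), if_neg (show ¬(n-1 = 0) by omega),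
        if_neg (show ¬(n-1 = p+m-1) by omega), if_pos (show 1 ≤ n-1 by omega),
        if_neg (show ¬(n-1 = p-1) by omega), if_pos rfl]
    have hs := hstep (n-1-1)
    rw [show (n-1-1)+1 = n-1 from by omega] at hs
    rw [hs, hchord2]
    rw [if_neg (show ¬(ca ≤ n-1-1 ∧ n-1-1 < cb) by omega), if_neg (show ¬(n-1 = ca) by omega),
        if_neg (show ¬(n-1 = cb) by omega)]
    norm_num
  · -- interior
    rw [if_pos (show w+1 < n by omega), if_neg hw0, if_pos (show 1 ≤ w by omega),
        if_neg hwn]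
    rw [hchord1, hchord2]
    simp only [ite_self]
    have hs := hstep (w-1)
    rw [show (w-1)+1 = w from by omega] at hs
    rw [hstep w, hs]
    split_ifs <;> first | omega | norm_num

lemma divG3 (a2 b2 w : ℕ) (h0 : p+m-1 ≤ a2) (h1 : a2 ≤ b2) (h2 : b2 ≤ n-1) (hw : w < n) :
    DivE p m n (fun x => cyc q a2 b2 (max x (p+m-1))) w
      = (if w = a2 then (1:ℝ) else 0) - (if w = b2 then 1 else 0) := by
  have hq0 : (q:ℝ) ≠ 0 := Nat.cast_ne_zero.mpr (by omega)
  have hstep : ∀ t, p+m-1 ≤ t →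
      cyc q a2 b2 (max t (p+m-1)) - cyc q a2 b2 (max (t+1) (p+m-1))
        = if a2 ≤ t ∧ t < b2 then ((q:ℝ) - ((b2:ℝ)-(a2:ℝ)))/q else -((((b2:ℝ)-(a2:ℝ)))/q) := by
    intro t ht
    rw [show max t (p+m-1) = t from by omega, show max (t+1) (p+m-1) = t+1 from by omega]
    exact cyc_step q a2 b2 t hq0 h1
  have hconst : ∀ x y : ℕ, x ≤ p+m-1 → y ≤ p+m-1 →
      cyc q a2 b2 (max x (p+m-1)) - cyc q a2 b2 (max y (p+m-1)) = 0 := by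
    intro x y hx hy
    rw [show max x (p+m-1) = p+m-1 from by omega, show max y (p+m-1) = p+m-1 from by omega,
        sub_self]
  have hchord : cyc q a2 b2 (max (p+m-1) (p+m-1)) - cyc q a2 b2 (max (n-1) (p+m-1))
      = ((b2:ℝ)-(a2:ℝ))/q := by
    have h := cyc_chord q a2 b2 (p+m-1) hq0 hq h0 h1 (by omega)
    rw [show ((p+m-1) + (q-1) : ℕ) = n-1 from by omega] at h
    rw [show max (p+m-1) (p+m-1) = p+m-1 from by omega,
        show max (n-1) (p+m-1) = n-1 from by omega]
    exact h
  simp only [DivE]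
  by_cases hwQ : w = p+m-1
  · subst hwQ
    rw [if_pos (show (p+m-1:ℕ)+1 < n by omega), if_neg (show ¬(p+m-1 = 0) by omega),
        if_pos rfl, if_pos (show 1 ≤ p+m-1 by omega), if_neg (show ¬(p+m-1 = n-1) by omega)]
    rw [hconst (p+m-1-1) (p+m-1) (by omega) (by omega), hchord]
    by_cases hm : p+m-1 = p-1
    · rw [if_pos hm]
      rw [hconst 0 (p-1) (by omega) (by omega)]
      rw [hstep (p+m-1) (by omega)]
      split_ifs <;> first | omega | (field_simp; try ring)
    · rw [if_neg hm]
      rw [hstep (p+m-1) (by omega)]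
      split_ifs <;> first | omega | (field_simp; try ring)
  by_cases hwn : w = n-1
  · subst hwn
    rw [if_neg (show ¬(n-1+1 < n) by omega), if_neg (show ¬(n-1 = 0) by omega),
        if_neg (show ¬(n-1 = p+m-1) by omega), if_pos (show 1 ≤ n-1 by omega),
        if_neg (show ¬(n-1 = p-1) by omega), if_pos rfl]
    have hs := hstep (n-1-1) (by omega)
    rw [show (n-1-1)+1 = n-1 from by omega] at hs
    rw [hs, hchord]
    split_ifs <;> first | omega | (field_simp; try ring)
  by_cases hwlt : w < p+m-1
  · -- below Q (includes w = 0 and possibly w = p-1)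
    by_cases hw0 : w = 0
    · subst hw0
      rw [if_pos (show (0:ℕ)+1 < n by omega), if_pos rfl, if_neg (show ¬((0:ℕ) = p+m-1) by omega),
          if_neg (show ¬(1 ≤ 0) by omega), if_neg (show ¬(0 = p-1) by omega),
          if_neg (show ¬(0 = n-1) by omega)]
      rw [hconst 0 (0+1) (by omega) (by omega), hconst 0 (p-1) (by omega) (by omega)]
      rw [if_neg (show ¬(0 = a2) by omega), if_neg (show ¬(0 = b2) by omega)]
      norm_num
    · rw [if_pos (show w+1 < n by omega), if_neg hw0, if_neg hwQ,
          if_pos (show 1 ≤ w by omega), if_neg (show ¬(w = n-1) by omega)]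
      rw [hconst w (w+1) (by omega) (by omega), hconst (w-1) w (by omega) (by omega),
          hconst 0 (p-1) (by omega) (by omega)]
      simp only [ite_self]
      rw [if_neg (show ¬(w = a2) by omega), if_neg (show ¬(w = b2) by omega)]
      norm_num
  · -- p+m-1 < w < n-1
    rw [if_pos (show w+1 < n by omega), if_neg (show ¬(w = 0) by omega), if_neg hwQ,
        if_pos (show 1 ≤ w by omega), if_neg (show ¬(w = p-1) by omega), if_neg hwn]
    have hs := hstep (w-1) (by omega)
    rw [show (w-1)+1 = w from by omega] at hs
    rw [hstep w (by omega), hs]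
    split_ifs <;> first | omega | (field_simp; try ring)

end D23

/-- the harmonic potential on `PGraph p m n` for a unit flow from `i` to `j` (`i < j`). -/
noncomputable def pot (p q m i j : ℕ) (x : ℕ) : ℝ :=
  cyc p (min i (p-1)) (min j (p-1)) (min x (p-1))
  + ((((min (max j (p-1)) (p+m-1) : ℕ):ℝ)
      - ((min (min (max j (p-1)) (p+m-1)) (max (min (max i (p-1)) (p+m-1)) x) : ℕ):ℝ))
     + cyc q (max i (p+m-1)) (max j (p+m-1)) (max x (p+m-1)))

section Assemble
variable (p q m n : ℕ) (hp : 3 ≤ p) (hq : 3 ≤ q) (hn : n = p + q + m - 1)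
include hp hq hn

lemma divPot (i j w : ℕ) (hij : i < j) (hjn : j < n) (hw : w < n) :
    DivE p m n (pot p q m i j) w = (if w = i then (1:ℝ) else 0) - (if w = j then 1 else 0) := by
  have e : DivE p m n (pot p q m i j) w
      = DivE p m n (fun x => cyc p (min i (p-1)) (min j (p-1)) (min x (p-1))) w
        + (DivE p m n (fun x => (((min (max j (p-1)) (p+m-1) : ℕ):ℝ)
            - ((min (min (max j (p-1)) (p+m-1)) (max (min (max i (p-1)) (p+m-1)) x) : ℕ):ℝ))) w
          + DivE p m n (fun x => cyc q (max i (p+m-1)) (max j (p+m-1)) (max x (p+m-1))) w) := by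
    rw [← DivE_add, ← DivE_add]
    rfl
  rw [e]
  rw [divG1 p q m n hp hq hn (min i (p-1)) (min j (p-1)) w (by omega) (by omega) hw]
  rw [divG2 p q m n hp hq hn (min (max i (p-1)) (p+m-1)) (min (max j (p-1)) (p+m-1)) w
      (by omega) (by omega) (by omega) hw]
  rw [divG3 p q m n hp hq hn (max i (p+m-1)) (max j (p+m-1)) w (by omega) (by omega)
      (by omega) hw]
  split_ifs <;> first | omega | norm_num

end Assemble

/-- symmetrized cycle-resistance term. -/
noncomputable def CC (L x y : ℕ) : ℝ := ((y:ℝ)-(x:ℝ)) * ((L:ℝ) - ((y:ℝ)-(x:ℝ))) / L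

/-- the resistance distance between `i ≤ j` in `PGraph`. -/
noncomputable def Rlow (p q m i j : ℕ) : ℝ :=
  CC p (min i (p-1)) (min j (p-1))
  + (((min (max j (p-1)) (p+m-1):ℕ):ℝ) - ((min (max i (p-1)) (p+m-1):ℕ):ℝ))
  + CC q (max i (p+m-1)) (max j (p+m-1))

section PotVal
variable (p q m n : ℕ) (hp : 3 ≤ p) (hq : 3 ≤ q) (hn : n = p + q + m - 1)
include hp hq hn

lemma pot_spread (i j : ℕ) (hij : i < j) (hjn : j < n) :
    pot p q m i j i - pot p q m i j j = Rlow p q m i j := by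
  unfold pot Rlow CC
  rw [cyc_at_left p _ _ (by omega), cyc_at_right p _ _ (by omega),
      cyc_at_left q _ _ (by omega), cyc_at_right q _ _ (by omega)]
  rw [show min (min (max j (p-1)) (p+m-1)) (max (min (max i (p-1)) (p+m-1)) i)
        = min (max i (p-1)) (p+m-1) from by omega,
      show min (min (max j (p-1)) (p+m-1)) (max (min (max i (p-1)) (p+m-1)) j)
        = min (max j (p-1)) (p+m-1) from by omega]
  ring

end PotVal
end DRAux

namespace DRAux

section Main
variable (p q m n : ℕ) (hp : 3 ≤ p) (hq : 3 ≤ q) (hn : n = p + q + m - 1)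
include hp hq hn

theorem eRes_PGraph_lt (a b : Fin n) (hab : a.val < b.val) :
    eRes (PGraph p m n) a b = Rlow p q m a.val b.val := by
  have h := eRes_eq_of_flow (PGraph p m n) a b (fun v : Fin n => pot p q m a.val b.val v.val)
    (eflow p m n (pot p q m a.val b.val))
    (eflow_anti p m n _)
    (fun u v h => eflow_supp p q m n hp hq hn _ u v h)
    (fun u v h => eflow_grad p q m n hp hq hn _ u v h)
    ?_ ?_
  · rw [h]
    exact pot_spread p q m n hp hq hn a.val b.val hab b.isLt
  · intro v hva hvb
    rw [sum_eflow p q m n hp hq hn _ v,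
        divPot p q m n hp hq hn a.val b.val v.val hab b.isLt v.isLt]
    rw [if_neg (fun h => hva (Fin.ext h)), if_neg (fun h => hvb (Fin.ext h))]
    ring
  · rw [sum_eflow p q m n hp hq hn _ a,
        divPot p q m n hp hq hn a.val b.val a.val hab b.isLt a.isLt]
    rw [if_pos rfl, if_neg (by omega)]
    ring

theorem eRes_PGraph (a b : Fin n) :
    eRes (PGraph p m n) a b = Rlow p q m (min a.val b.val) (max a.val b.val) := by
  rcases lt_trichotomy a.val b.val with h | h | h
  · rw [show min a.val b.val = a.val from by omega, show max a.val b.val = b.val from by omega]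
    exact eRes_PGraph_lt p q m n hp hq hn a b h
  · have : a = b := Fin.ext h
    subst this
    rw [eRes_self, min_self, max_self]
    unfold Rlow CC
    ring
  · rw [show min a.val b.val = b.val from by omega, show max a.val b.val = a.val from by omega,
        eRes_comm]
    exact eRes_PGraph_lt p q m n hp hq hn b a h

theorem vdeg_PGraph (v : Fin n) :
    ((vdeg (PGraph p m n) v : ℕ) : ℝ)
      = 2 + (if v.val = p-1 then 1 else 0) + (if v.val = p+m-1 then 1 else 0) := by
  classical
  have h1 : (PGraph p m n).neighborSet v
      = ↑(univ.filter (fun u => (PGraph p m n).Adj v u)) := by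
    ext u
    simp [SimpleGraph.mem_neighborSet]
  rw [vdeg, h1, Nat.card_coe_set_eq, Set.ncard_coe_finset, Finset.card_filter]
  push_cast
  have hpt : ∀ u : Fin n, (if (PGraph p m n).Adj v u then (1:ℝ) else 0)
      = (if u.val = v.val+1 then (1:ℝ) else 0) + (if v.val = u.val+1 then 1 else 0)
      + (if v.val = 0 ∧ u.val = p-1 then 1 else 0) + (if u.val = 0 ∧ v.val = p-1 then 1 else 0)
      + (if v.val = p+m-1 ∧ u.val = n-1 then 1 else 0)
      + (if u.val = p+m-1 ∧ v.val = n-1 then 1 else 0) := by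
    intro u
    have hu := u.isLt
    have hv := v.isLt
    rw [PGraph_adj]
    split_ifs <;> first | omega | norm_num
  rw [Finset.sum_congr rfl (fun u _ => hpt u)]
  have hv := v.isLt
  repeat rw [Finset.sum_add_distrib]
  have A1 : (∑ u : Fin n, if u.val = v.val + 1 then (1:ℝ) else 0)
      = if v.val + 1 < n then (1:ℝ) else 0 := by
    by_cases h : v.val + 1 < n
    · rw [if_pos h, sum_ite_eq_val (v.val+1) h (fun _ => (1:ℝ)) _ (fun u => Iff.rfl)]
    · rw [if_neg h, sum_ite_false']
      intro u; have := u.isLt; omega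
  have B1 : (∑ u : Fin n, if v.val = u.val + 1 then (1:ℝ) else 0)
      = if 1 ≤ v.val then (1:ℝ) else 0 := by
    by_cases h : 1 ≤ v.val
    · rw [if_pos h, sum_ite_eq_val (v.val-1) (by omega) (fun _ => (1:ℝ)) _ (fun u => by omega)]
    · rw [if_neg h, sum_ite_false']
      intro u; omega
  have A2 : (∑ u : Fin n, if v.val = 0 ∧ u.val = p-1 then (1:ℝ) else 0)
      = if v.val = 0 then (1:ℝ) else 0 := by
    by_cases h : v.val = 0
    · rw [if_pos h, sum_ite_eq_val (p-1) (by omega) (fun _ => (1:ℝ)) _ (fun u => by simp [h])]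
    · rw [if_neg h, sum_ite_false']
      intro u; tauto
  have B2 : (∑ u : Fin n, if u.val = 0 ∧ v.val = p-1 then (1:ℝ) else 0)
      = if v.val = p-1 then (1:ℝ) else 0 := by
    by_cases h : v.val = p-1
    · rw [if_pos h, sum_ite_eq_val 0 (by omega) (fun _ => (1:ℝ)) _ (fun u => by simp [h])]
    · rw [if_neg h, sum_ite_false']
      intro u; tauto
  have A3 : (∑ u : Fin n, if v.val = p+m-1 ∧ u.val = n-1 then (1:ℝ) else 0)
      = if v.val = p+m-1 then (1:ℝ) else 0 := by
    by_cases h : v.val = p+m-1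
    · rw [if_pos h, sum_ite_eq_val (n-1) (by omega) (fun _ => (1:ℝ)) _ (fun u => by simp [h])]
    · rw [if_neg h, sum_ite_false']
      intro u; tauto
  have B3 : (∑ u : Fin n, if u.val = p+m-1 ∧ v.val = n-1 then (1:ℝ) else 0)
      = if v.val = n-1 then (1:ℝ) else 0 := by
    by_cases h : v.val = n-1
    · rw [if_pos h, sum_ite_eq_val (p+m-1) (by omega) (fun _ => (1:ℝ)) _ (fun u => by simp [h])]
    · rw [if_neg h, sum_ite_false']
      intro u; tauto
  rw [A1, B1, A2, B2, A3, B3]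
  split_ifs <;> first | omega | norm_num

end Main
end DRAux

namespace DRAux

section Red
variable (p q m n : ℕ) (hp : 3 ≤ p) (hq : 3 ≤ q) (hn : n = p + q + m - 1)
include hp hq hn

lemma Rlow_symm (i j : ℕ) :
    Rlow p q m (min i j) (max i j) = Rlow p q m (min j i) (max j i) := by
  rw [min_comm, max_comm]

theorem DR_reduced :
    DR (PGraph p m n)
      = 2 * (∑ w ∈ range n, ∑ u ∈ range n, Rlow p q m (min u w) (max u w))
        + (∑ u ∈ range n, Rlow p q m (min u (p-1)) (max u (p-1)))
        + (∑ u ∈ range n, Rlow p q m (min u (p+m-1)) (max u (p+m-1))) := by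
  classical
  set D : ℕ → ℝ := fun w => 2 + (if w = p-1 then (1:ℝ) else 0) + (if w = p+m-1 then 1 else 0)
    with hD
  set RS : ℕ → ℕ → ℝ := fun i j => Rlow p q m (min i j) (max i j) with hRS
  have step1 : DR (PGraph p m n)
      = (1/2) * ∑ v : Fin n, ∑ u : Fin n, (D u.val + D v.val) * RS u.val v.val := by
    unfold DR
    congr 1
    refine Finset.sum_congr rfl fun v _ => Finset.sum_congr rfl fun u _ => ?_
    rw [vdeg_PGraph p q m n hp hq hn u, vdeg_PGraph p q m n hp hq hn v,
        eRes_PGraph p q m n hp hq hn u v]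
  rw [step1]
  have step2 : ∑ v : Fin n, ∑ u : Fin n, (D u.val + D v.val) * RS u.val v.val
      = ∑ w ∈ range n, ∑ u ∈ range n, (D u + D w) * RS u w := by
    rw [← Fin.sum_univ_eq_sum_range (fun w => ∑ u ∈ range n, (D u + D w) * RS u w) n]
    refine Finset.sum_congr rfl fun v _ => ?_
    rw [← Fin.sum_univ_eq_sum_range (fun u => (D u + D v.val) * RS u v.val) n]
  rw [step2]
  have hsym : ∀ i j : ℕ, RS i j = RS j i := fun i j => by
    simp only [hRS]; rw [min_comm, max_comm]
  have step3 : ∑ w ∈ range n, ∑ u ∈ range n, (D u + D w) * RS u w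
      = 2 * ∑ w ∈ range n, D w * ∑ u ∈ range n, RS u w := by
    have e1 : ∑ w ∈ range n, ∑ u ∈ range n, (D u + D w) * RS u w
        = ∑ w ∈ range n, ∑ u ∈ range n, D u * RS u w
          + ∑ w ∈ range n, ∑ u ∈ range n, D w * RS u w := by
      rw [← Finset.sum_add_distrib]
      refine Finset.sum_congr rfl fun w _ => ?_
      rw [← Finset.sum_add_distrib]
      exact Finset.sum_congr rfl fun u _ => by ring
    rw [e1]
    have e2 : ∑ w ∈ range n, ∑ u ∈ range n, D u * RS u w
        = ∑ w ∈ range n, D w * ∑ u ∈ range n, RS u w := by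
      rw [Finset.sum_comm]
      refine Finset.sum_congr rfl fun u _ => ?_
      rw [Finset.mul_sum]
      exact Finset.sum_congr rfl fun w _ => by rw [hsym]
    have e3 : ∑ w ∈ range n, ∑ u ∈ range n, D w * RS u w
        = ∑ w ∈ range n, D w * ∑ u ∈ range n, RS u w := by
      refine Finset.sum_congr rfl fun w _ => ?_
      rw [Finset.mul_sum]
    rw [e2, e3]
    ring
  rw [step3]
  set S : ℕ → ℝ := fun w => ∑ u ∈ range n, RS u w with hS
  have step4 : ∑ w ∈ range n, D w * S w
      = 2 * ∑ w ∈ range n, S w + S (p-1) + S (p+m-1) := by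
    have e : ∀ w ∈ range n, D w * S w
        = 2 * S w + (if w = p-1 then S w else 0) + (if w = p+m-1 then S w else 0) := by
      intro w _
      simp only [hD]
      split_ifs <;> ring
    rw [Finset.sum_congr rfl e]
    rw [Finset.sum_add_distrib, Finset.sum_add_distrib, ← Finset.mul_sum]
    rw [Finset.sum_ite_eq' (range n) (p-1) S, Finset.sum_ite_eq' (range n) (p+m-1) S]
    rw [if_pos (by simp; omega), if_pos (by simp; omega)]
  rw [step4]
  ring

end Red
end DRAux

namespace DRAux

lemma sum_range_add' (f : ℕ → ℝ) (a b : ℕ) :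
    ∑ i ∈ Finset.range (a+b), f i
      = ∑ i ∈ Finset.range a, f i + ∑ i ∈ Finset.range b, f (a+i) := by
  induction b with
  | zero => simp
  | succ k ih => rw [← add_assoc, sum_range_succ, ih, sum_range_succ, add_assoc]

lemma sum_poly2 (k : ℕ) (A B C : ℝ) :
    ∑ i ∈ range k, (A + B*(i:ℝ) + C*(i:ℝ)^2)
      = A*k + B*((k:ℝ)*((k:ℝ)-1)/2) + C*((k:ℝ)*((k:ℝ)-1)*(2*(k:ℝ)-1)/6) := by
  induction k with
  | zero => simp
  | succ j ih =>
      rw [sum_range_succ, ih]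
      push_cast
      ring

/-- symmetrized cycle term -/
noncomputable def CCs (L x y : ℕ) : ℝ := CC L (min x y) (max x y)

lemma CCs_comm (L x y : ℕ) : CCs L x y = CCs L y x := by
  unfold CCs
  rw [min_comm, max_comm]

lemma CCs_self (L x : ℕ) : CCs L x x = 0 := by
  unfold CCs CC
  simp

lemma CCs_shift (L s a b : ℕ) : CCs L (s+a) (s+b) = CCs L a b := by
  unfold CCs CC
  rw [show min (s+a) (s+b) = s + min a b from by omega,
      show max (s+a) (s+b) = s + max a b from by omega]
  push_cast
  ring_nf

lemma CCs_eval (L x y : ℕ) (h : x ≤ y) :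
    CCs L x y = ((y:ℝ)-(x:ℝ)) * ((L:ℝ) - ((y:ℝ)-(x:ℝ))) / L := by
  unfold CCs CC
  rw [min_eq_left h, max_eq_right h]

/-- sum of cycle resistances from a fixed vertex over the whole cycle. -/
lemma cycle_full (L x : ℕ) (hL : 3 ≤ L) (hx : x ≤ L-1) :
    ∑ j ∈ range L, CCs L x j = ((L:ℝ)^2 - 1)/6 := by
  have hL0 : (L:ℝ) ≠ 0 := Nat.cast_ne_zero.mpr (by omega)
  have hsplit := sum_range_add' (fun j => CCs L x j) (x+1) (L-(x+1))
  rw [show (x+1) + (L-(x+1)) = L from by omega] at hsplit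
  rw [hsplit]
  have e1 : ∀ j ∈ range (x+1), CCs L x j
      = (((x:ℝ)*((L:ℝ)-(x:ℝ))/L) + ((2*(x:ℝ)-(L:ℝ))/L)*(j:ℝ) + (-(1:ℝ)/L)*(j:ℝ)^2) := by
    intro j hj
    simp only [mem_range] at hj
    rw [CCs_comm, CCs_eval L j x (by omega)]
    field_simp
    ring
  have e2 : ∀ t ∈ range (L-(x+1)), CCs L x (x+1+t)
      = ((((L:ℝ)-1)/L) + (((L:ℝ)-2)/L)*(t:ℝ) + (-(1:ℝ)/L)*(t:ℝ)^2) := by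
    intro t ht
    simp only [mem_range] at ht
    rw [CCs_eval L x (x+1+t) (by omega)]
    push_cast
    field_simp
    ring
  rw [Finset.sum_congr rfl e1, Finset.sum_congr rfl e2, sum_poly2, sum_poly2]
  have c1 : ((x+1:ℕ):ℝ) = (x:ℝ)+1 := by push_cast; ring
  have c2 : ((L-(x+1):ℕ):ℝ) = (L:ℝ)-(x:ℝ)-1 := by
    push_cast [Nat.cast_sub (by omega : x+1 ≤ L)]; ring
  rw [c1, c2]
  field_simp
  ring


lemma cycle_tail (L z : ℕ) (hL : 3 ≤ L) (hz : z ≤ L-1) :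
    ∑ t ∈ range (L-1), CCs L (t+1) z = ((L:ℝ)^2-1)/6 - CCs L 0 z := by
  have h := Finset.sum_range_succ' (fun j => CCs L j z) (L-1)
  rw [show (L-1)+1 = L from by omega] at h
  have h2 : ∑ j ∈ range L, CCs L j z = ((L:ℝ)^2-1)/6 := by
    rw [Finset.sum_congr rfl (fun j _ => CCs_comm L j z)]
    exact cycle_full L z hL hz
  rw [h2] at h
  linarith

/-- clamp to the path segment -/
def cf (p m t : ℕ) : ℕ := min (max t (p-1)) (p+m-1)

lemma RS_split (p q m u w : ℕ) :
    Rlow p q m (min u w) (max u w)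
      = CCs p (min u (p-1)) (min w (p-1))
        + (((max (cf p m u) (cf p m w):ℕ):ℝ) - ((min (cf p m u) (cf p m w):ℕ):ℝ))
        + CCs q (max u (p+m-1)) (max w (p+m-1)) := by
  unfold Rlow CCs cf
  rw [show min (min u (p-1)) (min w (p-1)) = min (min u w) (p-1) from by omega,
      show max (min u (p-1)) (min w (p-1)) = min (max u w) (p-1) from by omega,
      show min (max u (p+m-1)) (max w (p+m-1)) = max (min u w) (p+m-1) from by omega,
      show max (max u (p+m-1)) (max w (p+m-1)) = max (max u w) (p+m-1) from by omega,
      show max (min (max u (p-1)) (p+m-1)) (min (max w (p-1)) (p+m-1))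
            = min (max (max u w) (p-1)) (p+m-1) from by omega,
      show min (min (max u (p-1)) (p+m-1)) (min (max w (p-1)) (p+m-1))
            = min (max (min u w) (p-1)) (p+m-1) from by omega]

/-- path potential inner-sum value -/
noncomputable def IP (p q m X : ℝ) : ℝ :=
  p*(X-p+1) + (q-1)*(p+m-1-X) + (X-p+1)*(X-p)/2 + (m-X+p-1)*(m-X+p)/2

section Sums
variable (p q m n : ℕ) (hp : 3 ≤ p) (hq : 3 ≤ q) (hn : n = p + q + m - 1)
include hp hq hn

lemma split3 (f : ℕ → ℝ) :
    ∑ i ∈ range n, f i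
      = (∑ i ∈ range p, f i) + (∑ t ∈ range m, f (p+t)) + (∑ t ∈ range (q-1), f (p+m+t)) := by
  have h1 := sum_range_add' f p (m+(q-1))
  rw [show p + (m+(q-1)) = n from by omega] at h1
  have h2 := sum_range_add' (fun i => f (p+i)) m (q-1)
  rw [h1, h2]
  rw [Finset.sum_congr rfl (fun t _ => show f (p+(m+t)) = f (p+m+t) from by rw [add_assoc])]
  ring

lemma innerP (y : ℕ) (hy : y ≤ p-1) :
    ∑ u ∈ range n, CCs p (min u (p-1)) y
      = ((p:ℝ)^2-1)/6 + ((n:ℝ)-(p:ℝ)) * CCs p (p-1) y := by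
  rw [split3 p q m n hp hq hn]
  have e1 : ∀ u ∈ range p, CCs p (min u (p-1)) y = CCs p y u := by
    intro u hu
    simp only [mem_range] at hu
    rw [show min u (p-1) = u from by omega, CCs_comm]
  have e2 : ∀ t ∈ range m, CCs p (min (p+t) (p-1)) y = CCs p (p-1) y := by
    intro t _
    rw [show min (p+t) (p-1) = p-1 from by omega]
  have e3 : ∀ t ∈ range (q-1), CCs p (min (p+m+t) (p-1)) y = CCs p (p-1) y := by
    intro t _
    rw [show min (p+m+t) (p-1) = p-1 from by omega]
  rw [Finset.sum_congr rfl e1, Finset.sum_congr rfl e2, Finset.sum_congr rfl e3,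
      cycle_full p y hp hy, Finset.sum_const, Finset.sum_const, card_range, card_range,
      nsmul_eq_mul, nsmul_eq_mul]
  have hc : ((q-1:ℕ):ℝ) = (q:ℝ)-1 := by
    rw [Nat.cast_sub (by omega)]; norm_num
  have hcn : (n:ℝ) = (p:ℝ)+(q:ℝ)+(m:ℝ)-1 := by
    rw [hn, Nat.cast_sub (by omega)]; push_cast; ring
  rw [hc, hcn]
  ring

lemma innerQ (y : ℕ) (hyl : p+m-1 ≤ y) (hyr : y ≤ n-1) :
    ∑ u ∈ range n, CCs q (max u (p+m-1)) y
      = ((q:ℝ)^2-1)/6 + ((p:ℝ)+(m:ℝ)-1) * CCs q (p+m-1) y := by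
  rw [split3 p q m n hp hq hn]
  have e1 : ∀ u ∈ range p, CCs q (max u (p+m-1)) y = CCs q (p+m-1) y := by
    intro u hu
    simp only [mem_range] at hu
    rw [show max u (p+m-1) = p+m-1 from by omega]
  have e2 : ∀ t ∈ range m, CCs q (max (p+t) (p+m-1)) y = CCs q (p+m-1) y := by
    intro t ht
    simp only [mem_range] at ht
    rw [show max (p+t) (p+m-1) = p+m-1 from by omega]
  have hshift : ∀ a : ℕ, CCs q ((p+m-1)+a) y = CCs q a (y-(p+m-1)) := by
    intro a
    have h := CCs_shift q (p+m-1) a (y-(p+m-1))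
    rw [show (p+m-1)+(y-(p+m-1)) = y from by omega] at h
    exact h
  have e3 : ∀ t ∈ range (q-1), CCs q (max (p+m+t) (p+m-1)) y = CCs q (t+1) (y-(p+m-1)) := by
    intro t _
    rw [show max (p+m+t) (p+m-1) = (p+m-1)+(t+1) from by omega, hshift]
  rw [Finset.sum_congr rfl e1, Finset.sum_congr rfl e2, Finset.sum_congr rfl e3,
      cycle_tail q (y-(p+m-1)) hq (by omega),
      Finset.sum_const, Finset.sum_const, card_range, card_range,
      nsmul_eq_mul, nsmul_eq_mul]
  have hc0 : CCs q 0 (y-(p+m-1)) = CCs q (p+m-1) y := by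
    have h := hshift 0
    rw [add_zero] at h
    rw [h]
  rw [hc0]
  ring

lemma outerCP : ∑ w ∈ range n, CCs p (p-1) (min w (p-1)) = ((p:ℝ)^2-1)/6 := by
  rw [split3 p q m n hp hq hn]
  have e1 : ∀ w ∈ range p, CCs p (p-1) (min w (p-1)) = CCs p (p-1) w := by
    intro w hw
    simp only [mem_range] at hw
    rw [show min w (p-1) = w from by omega]
  have e2 : ∀ t ∈ range m, CCs p (p-1) (min (p+t) (p-1)) = 0 := by
    intro t _
    rw [show min (p+t) (p-1) = p-1 from by omega, CCs_self]
  have e3 : ∀ t ∈ range (q-1), CCs p (p-1) (min (p+m+t) (p-1)) = 0 := by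
    intro t _
    rw [show min (p+m+t) (p-1) = p-1 from by omega, CCs_self]
  rw [Finset.sum_congr rfl e1, Finset.sum_congr rfl e2, Finset.sum_congr rfl e3,
      cycle_full p (p-1) hp (by omega)]
  simp

lemma outerCQ : ∑ w ∈ range n, CCs q (p+m-1) (max w (p+m-1)) = ((q:ℝ)^2-1)/6 := by
  rw [split3 p q m n hp hq hn]
  have e1 : ∀ w ∈ range p, CCs q (p+m-1) (max w (p+m-1)) = 0 := by
    intro w hw
    simp only [mem_range] at hw
    rw [show max w (p+m-1) = p+m-1 from by omega, CCs_self]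
  have e2 : ∀ t ∈ range m, CCs q (p+m-1) (max (p+t) (p+m-1)) = 0 := by
    intro t ht
    simp only [mem_range] at ht
    rw [show max (p+t) (p+m-1) = p+m-1 from by omega, CCs_self]
  have e3 : ∀ t ∈ range (q-1), CCs q (p+m-1) (max (p+m+t) (p+m-1)) = CCs q (t+1) 0 := by
    intro t _
    have h := CCs_shift q (p+m-1) 0 (t+1)
    rw [add_zero] at h
    rw [show max (p+m+t) (p+m-1) = (p+m-1)+(t+1) from by omega, h, CCs_comm]
  rw [Finset.sum_congr rfl e1, Finset.sum_congr rfl e2, Finset.sum_congr rfl e3,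
      cycle_tail q 0 hq (by omega), CCs_self]
  simp


lemma innerPath (x : ℕ) (h1 : p-1 ≤ x) (h2 : x ≤ p+m-1) :
    ∑ u ∈ range n, (((max (cf p m u) x : ℕ):ℝ) - ((min (cf p m u) x : ℕ):ℝ))
      = IP (p:ℝ) (q:ℝ) (m:ℝ) (x:ℝ) := by
  rw [split3 p q m n hp hq hn]
  have hc1 : ((p-1:ℕ):ℝ) = (p:ℝ)-1 := by rw [Nat.cast_sub (by omega)]; norm_num
  have hcQ : ((p+m-1:ℕ):ℝ) = (p:ℝ)+(m:ℝ)-1 := by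
    rw [Nat.cast_sub (by omega)]; push_cast; ring
  have e1 : ∀ u ∈ range p, (((max (cf p m u) x : ℕ):ℝ) - ((min (cf p m u) x : ℕ):ℝ))
      = (x:ℝ) - ((p:ℝ)-1) := by
    intro u hu
    simp only [mem_range] at hu
    rw [show cf p m u = p-1 from by unfold cf; omega]
    rw [show max (p-1) x = x from by omega, show min (p-1) x = p-1 from by omega, hc1]
  have e3 : ∀ t ∈ range (q-1), (((max (cf p m (p+m+t)) x : ℕ):ℝ) - ((min (cf p m (p+m+t)) x : ℕ):ℝ))
      = ((p:ℝ)+(m:ℝ)-1) - (x:ℝ) := by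
    intro t _
    rw [show cf p m (p+m+t) = p+m-1 from by unfold cf; omega]
    rw [show max (p+m-1) x = p+m-1 from by omega, show min (p+m-1) x = x from by omega, hcQ]
  have e2 : ∀ t ∈ range m, (((max (cf p m (p+t)) x : ℕ):ℝ) - ((min (cf p m (p+t)) x : ℕ):ℝ))
      = (((max (p+t) x : ℕ):ℝ) - ((min (p+t) x : ℕ):ℝ)) := by
    intro t ht
    simp only [mem_range] at ht
    rw [show cf p m (p+t) = p+t from by unfold cf; omega]
  rw [Finset.sum_congr rfl e1, Finset.sum_congr rfl e2, Finset.sum_congr rfl e3,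
      Finset.sum_const, Finset.sum_const, card_range, card_range, nsmul_eq_mul, nsmul_eq_mul]
  -- middle sum: split at k1 = x+1-p
  have hk1 : (x+1-p) + (m-(x+1-p)) = m := by omega
  have hmid := sum_range_add' (fun t => (((max (p+t) x : ℕ):ℝ) - ((min (p+t) x : ℕ):ℝ)))
      (x+1-p) (m-(x+1-p))
  rw [hk1] at hmid
  rw [hmid]
  have f1 : ∀ t ∈ range (x+1-p), (((max (p+t) x : ℕ):ℝ) - ((min (p+t) x : ℕ):ℝ))
      = (((x:ℝ)-(p:ℝ)) + (-1)*(t:ℝ) + 0*(t:ℝ)^2) := by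
    intro t ht
    simp only [mem_range] at ht
    rw [show max (p+t) x = x from by omega, show min (p+t) x = p+t from by omega]
    push_cast
    ring
  have f2 : ∀ s ∈ range (m-(x+1-p)),
      (((max (p+((x+1-p)+s)) x : ℕ):ℝ) - ((min (p+((x+1-p)+s)) x : ℕ):ℝ))
      = ((1:ℝ) + 1*(s:ℝ) + 0*(s:ℝ)^2) := by
    intro s hs
    simp only [mem_range] at hs
    rw [show p+((x+1-p)+s) = x+1+s from by omega]
    rw [show max (x+1+s) x = x+1+s from by omega, show min (x+1+s) x = x from by omega]
    push_cast
    ring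
  rw [Finset.sum_congr rfl f1, Finset.sum_congr rfl f2, sum_poly2, sum_poly2]
  have ck1 : ((x+1-p:ℕ):ℝ) = (x:ℝ)+1-(p:ℝ) := by
    rw [Nat.cast_sub (by omega)]; push_cast; ring
  have ck2 : ((m-(x+1-p):ℕ):ℝ) = (m:ℝ)-((x:ℝ)+1-(p:ℝ)) := by
    rw [Nat.cast_sub (by omega), ck1]; try ring
  rw [ck1, ck2]
  have hcq : ((q-1:ℕ):ℝ) = (q:ℝ)-1 := by rw [Nat.cast_sub (by omega)]; norm_num
  rw [hcq]
  unfold IP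
  ring

lemma outerPath :
    ∑ w ∈ range n, IP (p:ℝ) (q:ℝ) (m:ℝ) ((cf p m w : ℕ):ℝ)
      = ((m:ℝ)-1)*(m:ℝ)*((m:ℝ)-2)/3 + ((p:ℝ)+(q:ℝ))*(m:ℝ)*((m:ℝ)-1)
        + 2*(p:ℝ)*(q:ℝ)*(m:ℝ) := by
  rw [split3 p q m n hp hq hn]
  have hc1 : ((p-1:ℕ):ℝ) = (p:ℝ)-1 := by rw [Nat.cast_sub (by omega)]; norm_num
  have hcQ : ((p+m-1:ℕ):ℝ) = (p:ℝ)+(m:ℝ)-1 := by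
    rw [Nat.cast_sub (by omega)]; push_cast; ring
  have hcq : ((q-1:ℕ):ℝ) = (q:ℝ)-1 := by rw [Nat.cast_sub (by omega)]; norm_num
  have e1 : ∀ u ∈ range p, IP (p:ℝ) (q:ℝ) (m:ℝ) ((cf p m u : ℕ):ℝ)
      = IP (p:ℝ) (q:ℝ) (m:ℝ) ((p:ℝ)-1) := by
    intro u hu
    simp only [mem_range] at hu
    rw [show cf p m u = p-1 from by unfold cf; omega, hc1]
  have e3 : ∀ t ∈ range (q-1), IP (p:ℝ) (q:ℝ) (m:ℝ) ((cf p m (p+m+t) : ℕ):ℝ)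
      = IP (p:ℝ) (q:ℝ) (m:ℝ) ((p:ℝ)+(m:ℝ)-1) := by
    intro t _
    rw [show cf p m (p+m+t) = p+m-1 from by unfold cf; omega, hcQ]
  have e2 : ∀ t ∈ range m, IP (p:ℝ) (q:ℝ) (m:ℝ) ((cf p m (p+t) : ℕ):ℝ)
      = (((p:ℝ) + ((q:ℝ)-1)*((m:ℝ)-1) + (m:ℝ)*((m:ℝ)-1)/2)
          + ((p:ℝ)-(q:ℝ)+2-(m:ℝ))*(t:ℝ) + 1*(t:ℝ)^2) := by
    intro t ht
    simp only [mem_range] at ht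
    rw [show cf p m (p+t) = p+t from by unfold cf; omega]
    push_cast
    unfold IP
    ring
  rw [Finset.sum_congr rfl e1, Finset.sum_congr rfl e2, Finset.sum_congr rfl e3, sum_poly2,
      Finset.sum_const, Finset.sum_const, card_range, card_range, nsmul_eq_mul, nsmul_eq_mul,
      hcq]
  have v1 : IP (p:ℝ) (q:ℝ) (m:ℝ) ((p:ℝ)-1) = ((q:ℝ)-1)*(m:ℝ) + (m:ℝ)*((m:ℝ)+1)/2 := by
    unfold IP; ring
  have v2 : IP (p:ℝ) (q:ℝ) (m:ℝ) ((p:ℝ)+(m:ℝ)-1) = (p:ℝ)*(m:ℝ) + (m:ℝ)*((m:ℝ)-1)/2 := by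
    unfold IP; ring
  rw [v1, v2]
  ring

lemma doubleSum :
    ∑ w ∈ range n, ∑ u ∈ range n, Rlow p q m (min u w) (max u w)
      = ((p:ℝ)^2-1)*(2*(n:ℝ)-(p:ℝ))/6 + ((q:ℝ)^2-1)*(2*(n:ℝ)-(q:ℝ))/6
        + (((m:ℝ)-1)*(m:ℝ)*((m:ℝ)-2)/3 + ((p:ℝ)+(q:ℝ))*(m:ℝ)*((m:ℝ)-1)
           + 2*(p:ℝ)*(q:ℝ)*(m:ℝ)) := by
  have einner : ∀ w ∈ range n, ∑ u ∈ range n, Rlow p q m (min u w) (max u w)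
      = (((p:ℝ)^2-1)/6 + ((n:ℝ)-(p:ℝ)) * CCs p (p-1) (min w (p-1)))
        + IP (p:ℝ) (q:ℝ) (m:ℝ) ((cf p m w : ℕ):ℝ)
        + (((q:ℝ)^2-1)/6 + ((p:ℝ)+(m:ℝ)-1) * CCs q (p+m-1) (max w (p+m-1))) := by
    intro w hw
    simp only [mem_range] at hw
    rw [Finset.sum_congr rfl (fun u _ => RS_split p q m u w)]
    rw [Finset.sum_add_distrib, Finset.sum_add_distrib]
    rw [innerP p q m n hp hq hn (min w (p-1)) (by omega),
        innerPath p q m n hp hq hn (cf p m w) (by unfold cf; omega) (by unfold cf; omega),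
        innerQ p q m n hp hq hn (max w (p+m-1)) (by omega) (by omega)]
  rw [Finset.sum_congr rfl einner]
  rw [Finset.sum_add_distrib, Finset.sum_add_distrib, Finset.sum_add_distrib,
      Finset.sum_add_distrib, Finset.sum_const, Finset.sum_const, card_range,
      nsmul_eq_mul, nsmul_eq_mul, ← Finset.mul_sum, ← Finset.mul_sum,
      outerCP p q m n hp hq hn, outerCQ p q m n hp hq hn, outerPath p q m n hp hq hn]
  have hcn : (n:ℝ) = (p:ℝ)+(q:ℝ)+(m:ℝ)-1 := by
    rw [hn, Nat.cast_sub (by omega)]; push_cast; ring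
  rw [hcn]
  ring

lemma SPsum :
    ∑ u ∈ range n, Rlow p q m (min u (p-1)) (max u (p-1))
      = ((p:ℝ)^2-1)/6 + ((q:ℝ)^2-1)/6 + (m:ℝ)*((m:ℝ)-1)/2 + (q:ℝ)*(m:ℝ) := by
  rw [Finset.sum_congr rfl (fun u _ => RS_split p q m u (p-1))]
  rw [Finset.sum_add_distrib, Finset.sum_add_distrib]
  rw [show min (p-1) (p-1) = p-1 from by omega, show cf p m (p-1) = p-1 from by unfold cf; omega,
      show max (p-1) (p+m-1) = p+m-1 from by omega]
  rw [innerP p q m n hp hq hn (p-1) (by omega),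
      innerPath p q m n hp hq hn (p-1) (by omega) (by omega),
      innerQ p q m n hp hq hn (p+m-1) (by omega) (by omega),
      CCs_self, CCs_self]
  have hc1 : ((p-1:ℕ):ℝ) = (p:ℝ)-1 := by rw [Nat.cast_sub (by omega)]; norm_num
  rw [hc1]
  have v1 : IP (p:ℝ) (q:ℝ) (m:ℝ) ((p:ℝ)-1) = ((q:ℝ)-1)*(m:ℝ) + (m:ℝ)*((m:ℝ)+1)/2 := by
    unfold IP; ring
  rw [v1]
  ring

lemma SQsum :
    ∑ u ∈ range n, Rlow p q m (min u (p+m-1)) (max u (p+m-1))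
      = ((p:ℝ)^2-1)/6 + ((q:ℝ)^2-1)/6 + (m:ℝ)*((m:ℝ)-1)/2 + (p:ℝ)*(m:ℝ) := by
  rw [Finset.sum_congr rfl (fun u _ => RS_split p q m u (p+m-1))]
  rw [Finset.sum_add_distrib, Finset.sum_add_distrib]
  rw [show min (p+m-1) (p-1) = p-1 from by omega,
      show cf p m (p+m-1) = p+m-1 from by unfold cf; omega,
      show max (p+m-1) (p+m-1) = p+m-1 from by omega]
  rw [innerP p q m n hp hq hn (p-1) (by omega),
      innerPath p q m n hp hq hn (p+m-1) (by omega) (by omega),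
      innerQ p q m n hp hq hn (p+m-1) (by omega) (by omega),
      CCs_self, CCs_self]
  have hcQ : ((p+m-1:ℕ):ℝ) = (p:ℝ)+(m:ℝ)-1 := by
    rw [Nat.cast_sub (by omega)]; push_cast; ring
  rw [hcQ]
  have v2 : IP (p:ℝ) (q:ℝ) (m:ℝ) ((p:ℝ)+(m:ℝ)-1) = (p:ℝ)*(m:ℝ) + (m:ℝ)*((m:ℝ)-1)/2 := by
    unfold IP; ring
  rw [v2]
  ring

end Sums
end DRAux


/-- Closed formula for the degree resistance distance of `P_n^{p,q}`,
where `m = n + 1 - p - q` is the length of the connecting path. -/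
theorem DR_PGraph (p q m n : ℕ) (hp : 3 ≤ p) (hq : 3 ≤ q) (hn : n = p + q + m - 1) :
    DR (PGraph p m n) =
      (1/3) * ((p : ℝ)^3 + (q : ℝ)^3 + (2*(q : ℝ) + 2*(m : ℝ) - 1) * (p : ℝ)^2
        + (2*(p : ℝ) + 2*(m : ℝ) - 1) * (q : ℝ)^2
        + (6*(m : ℝ)^2 - 3*(m : ℝ) - 3) * ((p : ℝ) + (q : ℝ))
        + 12*(m : ℝ)*(p : ℝ)*(q : ℝ) + 2*(m : ℝ)^3 - 3*(m : ℝ)^2 - 3*(m : ℝ) + 2) := by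
  rw [DRAux.DR_reduced p q m n hp hq hn, DRAux.doubleSum p q m n hp hq hn,
      DRAux.SPsum p q m n hp hq hn, DRAux.SQsum p q m n hp hq hn]
  have hcn : (n:ℝ) = (p:ℝ)+(q:ℝ)+(m:ℝ)-1 := by
    rw [hn, Nat.cast_sub (by omega)]; push_cast; ring
  rw [hcn]
  ring
end
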